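/- arXiv:2006.00403 — 7 statements merged into one kernel-verified Lean document; each statement's English description precedes it below -/
import Mathlib

section
/- Let 0 < C1 ≤ C2, θ ∈ (0,1) and η > 0 be real constants. Let ω, g, H : [0,∞) → ℝ be nonnegative functions, and let F : [0,∞) → ℝ be continuous on [0,∞) and differentiable on (0,∞), satisfying C1·H(t) − g(t) ≤ F(t) ≤ C2·H(t) + g(t) for all t ≥ 0 and the differential inequality F′(t) + η·F(t) ≤ ω(t)·H(t)^θ + g(t) for all t > 0. Then there exists a constant C > 0, depending only on C1, C2 and θ, with the following property: for every t ≥ 0 and every M ≥ 0 such that F(0) ≤ M and (ω(s)/η)^{1/(1−θ)} + g(s)·(1 + 1/η) ≤ M for all s ∈ [0,t], one has F(t) ≤ C·M. -/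
/-!
Young's inequality with a small parameter gives `ω H^θ ≤ c η (ω/η)^{1/(1-θ)} + (C1/2) η H`, and the
lower bound `C1 H ≤ F + g` turns the last term into `(η/2)(F + g)`. Hence `F` satisfies
`F' + (η/2) F ≤ (η/2) B` with `B = 2 max(c, 1) M`, so `e^{ηs/2} (F s - B)` is antitone and `F t ≤ B`.
-/

open Set

theorem Real.exists_mul_rpow_le_mul_rpow_add_mul {θ ε : ℝ} (hθ : θ ∈ Ioo 0 1) (hε : 0 < ε) :
    ∃ c : ℝ, ∀ x y : ℝ, 0 ≤ x → 0 ≤ y → x * y ^ θ ≤ c * x ^ (1 / (1 - θ)) + ε * y := by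
  obtain ⟨hθ0, hθ1⟩ := hθ
  set δ := ε / θ
  have hδ : 0 < δ := div_pos hε hθ0
  refine ⟨(1 - θ) * (δ ^ (-θ)) ^ (1 / (1 - θ)), fun x y hx hy => ?_⟩
  -- weighted AM-GM with weights `1 - θ`, `θ` at the points `(x δ^(-θ))^(1/(1-θ))` and `δ y`
  have amgm := Real.geom_mean_le_arith_mean2_weighted (sub_nonneg.2 hθ1.le) hθ0.le
    (Real.rpow_nonneg (mul_nonneg hx (Real.rpow_nonneg hδ.le (-θ))) (1 / (1 - θ)))
    (mul_nonneg hδ.le hy) (sub_add_cancel 1 θ)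
  rw [one_div, Real.rpow_inv_rpow (by positivity) (by linarith), Real.mul_rpow hδ.le hy,
    Real.mul_rpow hx (Real.rpow_nonneg hδ.le _), Real.rpow_neg hδ.le] at amgm
  have hθδ : θ * (δ * y) = ε * y := by rw [← mul_assoc, mul_div_cancel₀ _ hθ0.ne']
  calc x * y ^ θ = x * (δ ^ θ)⁻¹ * (δ ^ θ * y ^ θ) := by field_simp
    _ ≤ _ := amgm
    _ = _ := by rw [one_div, Real.rpow_neg hδ.le, hθδ]; ring

theorem le_of_deriv_add_mul_le {f : ℝ → ℝ} {a b k B : ℝ} (hab : a ≤ b)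
    (hf : ContinuousOn f (Icc a b)) (hdf : ∀ x ∈ Ioo a b, DifferentiableAt ℝ f x)
    (hbound : ∀ x ∈ Ioo a b, deriv f x + k * f x ≤ k * B) (ha : f a ≤ B) : f b ≤ B := by
  set G : ℝ → ℝ := fun x => Real.exp (k * x) * (f x - B)
  have hG : ∀ x ∈ Ioo a b, HasDerivAt G (Real.exp (k * x) * (deriv f x + k * (f x - B))) x := by
    intro x hx
    refine ((((hasDerivAt_id x).const_mul k).exp).mul
      ((hdf x hx).hasDerivAt.sub_const B)).congr_deriv ?_
    simp only [id, mul_one]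
    ring
  have hanti : AntitoneOn G (Icc a b) := by
    refine antitoneOn_of_deriv_nonpos (convex_Icc a b) ?_ ?_ ?_
    · exact (by fun_prop : Continuous fun x => Real.exp (k * x)).continuousOn.mul
        (hf.sub continuousOn_const)
    · rw [interior_Icc]
      exact fun x hx => (hG x hx).differentiableAt.differentiableWithinAt
    · rw [interior_Icc]
      intro x hx
      rw [(hG x hx).deriv]
      exact mul_nonpos_of_nonneg_of_nonpos (Real.exp_pos _).le (by linarith [hbound x hx])
  have hGb : G b ≤ 0 := (hanti ⟨le_rfl, hab⟩ ⟨hab, le_rfl⟩ hab).trans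
    (mul_nonpos_of_nonneg_of_nonpos (Real.exp_pos _).le (sub_nonpos.2 ha))
  exact sub_nonpos.1 (nonpos_of_mul_nonpos_right hGb (Real.exp_pos _))

theorem deriv_add_half_mul_le {η C1 c K M F F' ω g H Hθ W : ℝ} (hη : 0 < η) (hg : 0 ≤ g)
    (hW : 0 ≤ W) (hcK : c ≤ K) (hK : 1 ≤ K) (hode : F' + η * F ≤ ω * Hθ + g)
    (hyoung : ω / η * Hθ ≤ c * W + C1 / 2 * H) (hlow : C1 * H - g ≤ F)
    (hM : W + g * (1 + 1 / η) ≤ M) :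
    F' + η / 2 * F ≤ η / 2 * (2 * K * M) := by
  have hωH : ω * Hθ ≤ η * (c * W) + η / 2 * (C1 * H) := calc
    ω * Hθ = η * (ω / η * Hθ) := by field_simp
    _ ≤ η * (c * W + C1 / 2 * H) := by gcongr
    _ = η * (c * W) + η / 2 * (C1 * H) := by ring
  have hηg : 0 ≤ η * g + g := by positivity
  have hsource : η * (c * W) + η / 2 * g + g ≤ η * (K * M) := calc
    _ ≤ η * (K * W) + K * (η * g + g) := by
      have hcW : η * (c * W) ≤ η * (K * W) := by gcongr
      nlinarith [mul_le_mul_of_nonneg_right hK hηg, mul_nonneg hη.le hg]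
    _ = η * K * (W + g * (1 + 1 / η)) := by field_simp
    _ ≤ η * (K * M) := by rw [← mul_assoc]; gcongr
  nlinarith

theorem gronwall_relaxation_F_bound_general
    (C1 C2 θ : ℝ) (hC1 : 0 < C1) (hθ : θ ∈ Set.Ioo (0:ℝ) 1) :
    ∃ C > (0:ℝ), ∀ (η : ℝ), 0 < η → ∀ (ω g H F : ℝ → ℝ),
      (∀ t ≥ (0:ℝ), 0 ≤ ω t) →
      (∀ t ≥ (0:ℝ), 0 ≤ g t) →
      (∀ t ≥ (0:ℝ), 0 ≤ H t) →
      ContinuousOn F (Set.Ici 0) →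
      (∀ t > (0:ℝ), DifferentiableAt ℝ F t) →
      (∀ t ≥ (0:ℝ), C1 * H t - g t ≤ F t) →
      (∀ t ≥ (0:ℝ), F t ≤ C2 * H t + g t) →
      (∀ t > (0:ℝ), deriv F t + η * F t ≤ ω t * H t ^ θ + g t) →
      ∀ t ≥ (0:ℝ), ∀ M ≥ (0:ℝ), F 0 ≤ M →
        (∀ s ∈ Set.Icc (0:ℝ) t, (ω s / η) ^ (1/(1-θ)) + g s * (1 + 1/η) ≤ M) →
        F t ≤ C * M := by
  obtain ⟨c, hyoung⟩ := Real.exists_mul_rpow_le_mul_rpow_add_mul hθ (half_pos hC1)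
  have hK : 1 ≤ max c 1 := le_max_right c 1
  refine ⟨2 * max c 1, by positivity, ?_⟩
  intro η hη ω g H F hω hg hH hFc hdF hlow _ hode t ht M hM hF0 hMt
  refine le_of_deriv_add_mul_le (k := η / 2) ht (hFc.mono Icc_subset_Ici_self)
    (fun s hs => hdF s hs.1) (fun s hs => ?_) (hF0.trans (by nlinarith))
  have hs0 : 0 ≤ s := hs.1.le
  have hωη : 0 ≤ ω s / η := div_nonneg (hω s hs0) hη.le
  exact deriv_add_half_mul_le hη (hg s hs0) (Real.rpow_nonneg hωη _) (le_max_left c 1) hK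
    (hode s hs.1) (hyoung _ _ hωη (hH s hs0)) (hlow s hs0) (hMt s ⟨hs0, hs.2.le⟩)

/-- Generalized Grönwall inequality with relaxation: bound on `F`. -/
theorem gronwall_relaxation_F_bound
    (C1 C2 θ : ℝ) (hC1 : 0 < C1) (hC12 : C1 ≤ C2) (hθ : θ ∈ Set.Ioo (0:ℝ) 1) :
    ∃ C > (0:ℝ), ∀ (η : ℝ), 0 < η → ∀ (ω g H F : ℝ → ℝ),
      (∀ t ≥ (0:ℝ), 0 ≤ ω t) →
      (∀ t ≥ (0:ℝ), 0 ≤ g t) →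
      (∀ t ≥ (0:ℝ), 0 ≤ H t) →
      ContinuousOn F (Set.Ici 0) →
      (∀ t > (0:ℝ), DifferentiableAt ℝ F t) →
      (∀ t ≥ (0:ℝ), C1 * H t - g t ≤ F t) →
      (∀ t ≥ (0:ℝ), F t ≤ C2 * H t + g t) →
      (∀ t > (0:ℝ), deriv F t + η * F t ≤ ω t * H t ^ θ + g t) →
      ∀ t ≥ (0:ℝ), ∀ M ≥ (0:ℝ), F 0 ≤ M →
        (∀ s ∈ Set.Icc (0:ℝ) t, (ω s / η) ^ (1/(1-θ)) + g s * (1 + 1/η) ≤ M) →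
        F t ≤ C * M :=
  gronwall_relaxation_F_bound_general C1 C2 θ hC1 hθ
end

section
/- Let 0 < C1 ≤ C2, θ ∈ (0,1) and η > 0 be real constants. Let ω, g, H : [0,∞) → ℝ be nonnegative functions, and let F : [0,∞) → ℝ be continuous on [0,∞) and differentiable on (0,∞), satisfying C1·H(t) − g(t) ≤ F(t) ≤ C2·H(t) + g(t) for all t ≥ 0 and the differential inequality F′(t) + η·F(t) ≤ ω(t)·H(t)^θ + g(t) for all t > 0. Assume in addition that ω and g are monotonically decreasing (antitone) on [0,∞). Then there exists a constant C > 0, depending only on C1, C2, θ and η, such that for all t ≥ 0: F(t) ≤ C·[ max(F(0),0)·exp(−ηt/2) + ( η^{−1/(1−θ)}·ω(0)^{1/(1−θ)} + (1 + 1/η)·g(0) )·exp(−ηt/8) + η^{−1/(1−θ)}·ω(t/2)^{1/(1−θ)} + (1 + 1/η)·g(t/2) ]. -/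
/-!
Young's inequality with weight `ηC₁/(2θ)` bounds `ω H^θ` by `(η/2)·C₁H` plus a multiple of
`ω^{1/(1-θ)}`, and the lower bound `C₁H ≤ F + g` lets half of the damping absorb the first
part. This leaves `F' + (η/2)F ≤ M` with an antitone forcing `M` built from `g` and
`ω^{1/(1-θ)}`. Comparing with the constant forcing `M 0` on `[0, t/2]` and `M (t/2)` on
`[t/2, t]` gives the bound.
-/

open Real Set

theorem sub_div_le_exp_mul_sub_div_of_deriv_add_mul_le {F : ℝ → ℝ} {κ M a b : ℝ}
    (hκ : κ ≠ 0) (hab : a ≤ b) (hcont : ContinuousOn F (Icc a b))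
    (hdiff : ∀ s ∈ Ioo a b, DifferentiableAt ℝ F s)
    (hF : ∀ s ∈ Ioo a b, deriv F s + κ * F s ≤ M) :
    F b - M / κ ≤ exp (-(κ * (b - a))) * (F a - M / κ) := by
  set G : ℝ → ℝ := fun s ↦ exp (κ * s) * (F s - M / κ)
  have hG : ∀ s ∈ Ioo a b,
      HasDerivAt G (exp (κ * s) * (deriv F s + κ * F s - M)) s := by
    intro s hs
    have hexp : HasDerivAt (fun s ↦ exp (κ * s)) (exp (κ * s) * κ) s := by
      simpa using ((hasDerivAt_id s).const_mul κ).exp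
    refine (hexp.mul ((hdiff s hs).hasDerivAt.sub_const (M / κ))).congr_deriv ?_
    field_simp
    ring
  have hG_anti : AntitoneOn G (Icc a b) := by
    refine antitoneOn_of_hasDerivWithinAt_nonpos
      (f' := fun s ↦ exp (κ * s) * (deriv F s + κ * F s - M)) (convex_Icc a b) ?_
      (fun s hs ↦ ?_) (fun s hs ↦ ?_)
    · exact (continuous_exp.comp (continuous_const.mul continuous_id)).continuousOn.mul
        (hcont.sub continuousOn_const)
    · rw [interior_Icc] at hs ⊢
      exact (hG s hs).hasDerivWithinAt
    · rw [interior_Icc] at hs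
      exact mul_nonpos_of_nonneg_of_nonpos (exp_pos _).le (by linarith [hF s hs])
  have hGab : G b ≤ G a := hG_anti (left_mem_Icc.2 hab) (right_mem_Icc.2 hab) hab
  have hexp : exp (κ * a) = exp (-(κ * (b - a))) * exp (κ * b) := by
    rw [← exp_add]; ring_nf
  rw [← mul_le_mul_iff_right₀ (exp_pos (κ * b))]
  calc exp (κ * b) * (F b - M / κ) ≤ exp (κ * a) * (F a - M / κ) := hGab
    _ = _ := by rw [hexp]; ring

theorem mul_rpow_le_mul_add_rpow {θ a w X : ℝ} (hθ₀ : 0 ≤ θ) (hθ₁ : θ < 1) (ha : 0 < a)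
    (hw : 0 ≤ w) (hX : 0 ≤ X) :
    w * X ^ θ ≤ θ * (a * X) + (1 - θ) * (a ^ (-θ) * w) ^ (1 / (1 - θ)) := by
  have hv : 0 ≤ a ^ (-θ) * w := by positivity
  have hroot : ((a ^ (-θ) * w) ^ (1 / (1 - θ))) ^ (1 - θ) = a ^ (-θ) * w := by
    rw [← rpow_mul hv, one_div_mul_cancel (by linarith), rpow_one]
  have hprod : (a * X) ^ θ * ((a ^ (-θ) * w) ^ (1 / (1 - θ))) ^ (1 - θ) = w * X ^ θ := by
    rw [hroot, mul_rpow ha.le hX, rpow_neg ha.le]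
    field_simp
  rw [← hprod]
  exact geom_mean_le_arith_mean2_weighted hθ₀ (by linarith) (by positivity) (by positivity)
    (by ring)

theorem le_exp_mul_add_of_deriv_add_mul_le_of_antitoneOn {F M : ℝ → ℝ} {κ t : ℝ}
    (hκ : 0 < κ) (hcont : ContinuousOn F (Ici 0)) (hdiff : ∀ s > 0, DifferentiableAt ℝ F s)
    (hF : ∀ s > 0, deriv F s + κ * F s ≤ M s) (hM : AntitoneOn M (Ici 0))
    (hM₀ : ∀ s ≥ 0, 0 ≤ M s) (ht : 0 ≤ t) :
    F t ≤ exp (-(κ * t)) * F 0 + exp (-(κ * t / 2)) * (M 0 / κ) + M (t / 2) / κ := by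
  have step : ∀ a b, 0 ≤ a → a ≤ b → F b ≤ exp (-(κ * (b - a))) * F a + M a / κ := by
    intro a b ha hab
    have h := sub_div_le_exp_mul_sub_div_of_deriv_add_mul_le (M := M a) hκ.ne' hab
      (hcont.mono fun s hs ↦ ha.trans hs.1) (fun s hs ↦ hdiff s (ha.trans_lt hs.1))
      fun s hs ↦ (hF s (ha.trans_lt hs.1)).trans (hM ha (ha.trans hs.1.le) hs.1.le)
    have hMa : 0 ≤ M a / κ := div_nonneg (hM₀ a ha) hκ.le
    nlinarith [mul_nonneg (exp_pos (-(κ * (b - a)))).le hMa]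
  have ht2 : 0 ≤ t / 2 := by positivity
  have h₁ := step 0 (t / 2) le_rfl ht2
  have h₂ := step (t / 2) t ht2 (by linarith)
  rw [sub_zero, ← mul_div_assoc] at h₁
  rw [show κ * (t - t / 2) = κ * t / 2 by ring] at h₂
  have hsq : exp (-(κ * t / 2)) * exp (-(κ * t / 2)) = exp (-(κ * t)) := by
    rw [← exp_add]; ring_nf
  calc F t ≤ exp (-(κ * t / 2)) * F (t / 2) + M (t / 2) / κ := h₂
    _ ≤ exp (-(κ * t / 2)) * (exp (-(κ * t / 2)) * F 0 + M 0 / κ) + M (t / 2) / κ := by gcongr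
    _ = _ := by rw [← hsq]; ring

theorem add_half_mul_le_of_le_mul_rpow_add {C₁ θ η d f h w y : ℝ} (hC₁ : 0 < C₁)
    (hθ : θ ∈ Ioo 0 1) (hη : 0 < η) (hw : 0 ≤ w) (hh : 0 ≤ h) (hlow : C₁ * h - y ≤ f)
    (hd : d + η * f ≤ w * h ^ θ + y) :
    d + η / 2 * f ≤ (1 + η / 2) * y
      + (1 - θ) * ((η * C₁ / (2 * θ)) ^ (-θ)) ^ (1 / (1 - θ)) * w ^ (1 / (1 - θ)) := by
  obtain ⟨hθ₀, hθ₁⟩ := hθ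
  have hyoung :=
    mul_rpow_le_mul_add_rpow hθ₀.le hθ₁ (by positivity : 0 < η * C₁ / (2 * θ)) hw hh
  rw [mul_rpow (by positivity) hw] at hyoung
  have habsorb : θ * (η * C₁ / (2 * θ) * h) = η / 2 * (C₁ * h) := by field_simp
  linarith [mul_le_mul_of_nonneg_left hlow (half_pos hη).le]

theorem div_half_le_max_mul {η K q w y : ℝ} (hη : 0 < η) (hw : 0 ≤ w) (hy : 0 ≤ y) :
    ((1 + η / 2) * y + K * w ^ q) / (η / 2)
      ≤ max 2 (2 * K * η ^ q / η) * (η ^ (-q) * w ^ q + (1 + 1 / η) * y) := by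
  have hηq : η ^ q * η ^ (-q) = 1 := by rw [← rpow_add hη]; simp
  have hsplit : ((1 + η / 2) * y + K * w ^ q) / (η / 2)
      = 2 * K * η ^ q / η * (η ^ (-q) * w ^ q) + (2 / η + 1) * y := by
    field_simp
    linear_combination (-2 * K * w ^ q) * hηq
  have hy' : (2 / η + 1) * y ≤ 2 * ((1 + 1 / η) * y) := by
    ring_nf; linarith
  rw [hsplit, mul_add]
  refine add_le_add ?_ (hy'.trans ?_) <;> gcongr
  · exact le_max_right _ _
  · exact le_max_left _ _

theorem gronwall_relaxation_monotone_F_decay_general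
    (C1 C2 θ η : ℝ) (hC1 : 0 < C1) (hθ : θ ∈ Set.Ioo (0:ℝ) 1)
    (hη : 0 < η) :
    ∃ C > (0:ℝ), ∀ (ω g H F : ℝ → ℝ),
      (∀ t ≥ (0:ℝ), 0 ≤ ω t) →
      (∀ t ≥ (0:ℝ), 0 ≤ g t) →
      (∀ t ≥ (0:ℝ), 0 ≤ H t) →
      ContinuousOn F (Set.Ici 0) →
      (∀ t > (0:ℝ), DifferentiableAt ℝ F t) →
      (∀ t ≥ (0:ℝ), C1 * H t - g t ≤ F t) →
      (∀ t ≥ (0:ℝ), F t ≤ C2 * H t + g t) →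
      (∀ t > (0:ℝ), deriv F t + η * F t ≤ ω t * H t ^ θ + g t) →
      AntitoneOn ω (Set.Ici 0) →
      AntitoneOn g (Set.Ici 0) →
      ∀ t ≥ (0:ℝ),
        F t ≤ C * (max (F 0) 0 * Real.exp (-η * t / 2)
          + (η ^ (-(1/(1-θ))) * ω 0 ^ (1/(1-θ)) + (1 + 1/η) * g 0) * Real.exp (-η * t / 8)
          + η ^ (-(1/(1-θ))) * ω (t/2) ^ (1/(1-θ)) + (1 + 1/η) * g (t/2)) := by
  set q := 1 / (1 - θ)
  set K := (1 - θ) * ((η * C1 / (2 * θ)) ^ (-θ)) ^ q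
  set C := max 2 (2 * K * η ^ q / η)
  refine ⟨C, lt_max_of_lt_left two_pos, ?_⟩
  intro ω g H F hω hg hH hFc hFd hlow _ hode hωa hga t ht
  set M : ℝ → ℝ := fun s ↦ (1 + η / 2) * g s + K * ω s ^ q
  have hθ₀ : 0 < θ := hθ.1
  have hθ₁ : 0 < 1 - θ := sub_pos.2 hθ.2
  have hK : 0 ≤ K := by positivity
  have hM_anti : AntitoneOn M (Ici 0) := fun a ha b hb hab ↦ by
    have := hga ha hb hab
    have := rpow_le_rpow (hω b hb) (hωa ha hb hab) (by positivity : 0 ≤ q)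
    simp only [M]; gcongr
  have hM₀ : ∀ s ≥ 0, 0 ≤ M s := fun s hs ↦
    add_nonneg (mul_nonneg (by positivity) (hg s hs)) (mul_nonneg hK (rpow_nonneg (hω s hs) q))
  have hFM : ∀ s > 0, deriv F s + η / 2 * F s ≤ M s := fun s hs ↦
    add_half_mul_le_of_le_mul_rpow_add hC1 hθ hη (hω s hs.le) (hH s hs.le) (hlow s hs.le)
      (hode s hs)
  have hdecay := le_exp_mul_add_of_deriv_add_mul_le_of_antitoneOn (half_pos hη) hFc hFd hFM
    hM_anti hM₀ ht
  have hC : 1 ≤ C := le_max_of_le_left one_le_two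
  have hM_le : ∀ s ≥ 0, M s / (η / 2) ≤ C * (η ^ (-q) * ω s ^ q + (1 + 1 / η) * g s) :=
    fun s hs ↦ div_half_le_max_mul hη (hω s hs) (hg s hs)
  have hinit : exp (-(η / 2 * t)) * F 0 ≤ C * (max (F 0) 0 * exp (-η * t / 2)) := by
    rw [show -(η / 2 * t) = -η * t / 2 by ring, mul_comm]
    calc F 0 * exp (-η * t / 2) ≤ max (F 0) 0 * exp (-η * t / 2) := by
          gcongr; exact le_max_left _ _
      _ ≤ C * (max (F 0) 0 * exp (-η * t / 2)) := le_mul_of_one_le_left (by positivity) hC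
  have htransient : exp (-(η / 2 * t / 2)) * (M 0 / (η / 2))
      ≤ C * (η ^ (-q) * ω 0 ^ q + (1 + 1 / η) * g 0) * exp (-η * t / 8) := by
    have hM0 := hM_le 0 le_rfl
    rw [mul_comm]
    exact mul_le_mul hM0 (exp_le_exp.2 (by nlinarith)) (exp_pos _).le
      ((div_nonneg (hM₀ 0 le_rfl) (by positivity)).trans hM0)
  linarith [hM_le (t / 2) (by positivity)]

/-- Generalized Grönwall inequality with relaxation, monotone data: decay bound on `F`. -/
theorem gronwall_relaxation_monotone_F_decay
    (C1 C2 θ η : ℝ) (hC1 : 0 < C1) (hC12 : C1 ≤ C2) (hθ : θ ∈ Set.Ioo (0:ℝ) 1)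
    (hη : 0 < η) :
    ∃ C > (0:ℝ), ∀ (ω g H F : ℝ → ℝ),
      (∀ t ≥ (0:ℝ), 0 ≤ ω t) →
      (∀ t ≥ (0:ℝ), 0 ≤ g t) →
      (∀ t ≥ (0:ℝ), 0 ≤ H t) →
      ContinuousOn F (Set.Ici 0) →
      (∀ t > (0:ℝ), DifferentiableAt ℝ F t) →
      (∀ t ≥ (0:ℝ), C1 * H t - g t ≤ F t) →
      (∀ t ≥ (0:ℝ), F t ≤ C2 * H t + g t) →
      (∀ t > (0:ℝ), deriv F t + η * F t ≤ ω t * H t ^ θ + g t) →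
      AntitoneOn ω (Set.Ici 0) →
      AntitoneOn g (Set.Ici 0) →
      ∀ t ≥ (0:ℝ),
        F t ≤ C * (max (F 0) 0 * Real.exp (-η * t / 2)
          + (η ^ (-(1/(1-θ))) * ω 0 ^ (1/(1-θ)) + (1 + 1/η) * g 0) * Real.exp (-η * t / 8)
          + η ^ (-(1/(1-θ))) * ω (t/2) ^ (1/(1-θ)) + (1 + 1/η) * g (t/2)) :=
  gronwall_relaxation_monotone_F_decay_general C1 C2 θ η hC1 hθ hη
end

section
/- Let 0 < C1 ≤ C2, θ ∈ (0,1) and η > 0 be real constants. Let ω, g, H : [0,∞) → ℝ be nonnegative functions, and let F : [0,∞) → ℝ be continuous on [0,∞) and differentiable on (0,∞), satisfying C1·H(t) − g(t) ≤ F(t) ≤ C2·H(t) + g(t) for all t ≥ 0 and the differential inequality F′(t) + η·F(t) ≤ ω(t)·H(t)^θ + g(t) for all t > 0. Assume in addition that ω and g are monotonically decreasing (antitone) on [0,∞). Then there exists a constant C > 0, depending only on C1, C2, θ and η, such that for all t ≥ 0: H(t) ≤ C·[ max(F(0),0)·exp(−ηt/2) + ( η^{−1/(1−θ)}·ω(0)^{1/(1−θ)}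 + (1 + 1/η)·g(0) )·exp(−ηt/8) + η^{−1/(1−θ)}·ω(t/2)^{1/(1−θ)} + (1 + 1/η)·g(t/2) ]. -/
open Real Set

private lemma gron_step (F : ℝ → ℝ) (a b t0 t : ℝ) (ha : 0 < a) (hb : 0 ≤ b)
    (h0 : 0 ≤ t0) (ht : t0 ≤ t)
    (hFc : ContinuousOn F (Set.Ici 0))
    (hFd : ∀ s > (0:ℝ), DifferentiableAt ℝ F s)
    (hineq : ∀ s, t0 < s → s < t → deriv F s + a * F s ≤ a * b) :
    F t ≤ F t0 * Real.exp (-(a * (t - t0))) + b := by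
  rcases eq_or_lt_of_le ht with rfl | htlt
  · simp only [sub_self, mul_zero, neg_zero, Real.exp_zero, mul_one]
    linarith
  · set φ : ℝ → ℝ := fun s => (F s - b) * Real.exp (a * s) with hφ
    have hexp : ∀ s : ℝ, HasDerivAt (fun u : ℝ => Real.exp (a * u)) (Real.exp (a * s) * a) s := by
      intro s
      have h1 : HasDerivAt (fun u : ℝ => a * u) a s := by
        simpa using (hasDerivAt_id s).const_mul a
      exact (Real.hasDerivAt_exp (a * s)).comp s h1
    have hder : ∀ s ∈ Set.Ioo t0 t, HasDerivAt φ
        (deriv F s * Real.exp (a * s) + (F s - b) * (Real.exp (a * s) * a)) s := by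
      intro s hs
      have hspos : 0 < s := lt_of_le_of_lt h0 hs.1
      exact (((hFd s hspos).hasDerivAt).sub_const b).mul (hexp s)
    have hanti : AntitoneOn φ (Set.Icc t0 t) := by
      apply antitoneOn_of_deriv_nonpos (convex_Icc _ _)
      · apply ContinuousOn.mul
        · exact (hFc.mono (fun x hx => le_trans h0 hx.1)).sub continuousOn_const
        · exact (Real.continuous_exp.comp (continuous_const.mul continuous_id)).continuousOn
      · rw [interior_Icc]
        exact fun s hs => ((hder s hs).differentiableAt).differentiableWithinAt
      · rw [interior_Icc]
        intro s hs
        rw [(hder s hs).deriv]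
        have h1 := hineq s hs.1 hs.2
        have h2 := Real.exp_pos (a * s)
        nlinarith
    have hkey := hanti (Set.left_mem_Icc.2 ht) (Set.right_mem_Icc.2 ht) ht
    simp only [hφ] at hkey
    have hE : Real.exp (-(a * (t - t0))) = Real.exp (a * t0) / Real.exp (a * t) := by
      rw [eq_div_iff (Real.exp_pos _).ne', ← Real.exp_add]; ring_nf
    have hEt := Real.exp_pos (a * t)
    have hle : F t - b ≤ (F t0 - b) * Real.exp (-(a * (t - t0))) := by
      rw [hE, ← mul_div_assoc, le_div_iff₀ hEt]
      exact hkey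
    have hEle : Real.exp (-(a * (t - t0))) ≤ 1 := by
      apply Real.exp_le_one_iff.2 (by nlinarith)
    have hEpos := Real.exp_pos (-(a * (t - t0)))
    nlinarith

private lemma young_aux (θ lam w x : ℝ) (hθ0 : 0 < θ) (hθ1 : θ < 1) (hlam : 0 < lam)
    (hw : 0 ≤ w) (hx : 0 ≤ x) :
    w * x ^ θ ≤ θ * lam * x + (1 - θ) * lam ^ (-(θ / (1 - θ))) * w ^ (1 / (1 - θ)) := by
  have h1θ : (0:ℝ) < 1 - θ := by linarith
  have hlθ : (0:ℝ) < lam ^ (-θ) := Real.rpow_pos_of_pos hlam _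
  have hwl : 0 ≤ w * lam ^ (-θ) := mul_nonneg hw hlθ.le
  have hp1 : 0 ≤ (w * lam ^ (-θ)) ^ (1 / (1 - θ)) := Real.rpow_nonneg hwl _
  have hamgm := Real.geom_mean_le_arith_mean2_weighted h1θ.le hθ0.le hp1
    (mul_nonneg hlam.le hx) (by ring)
  have e1 : ((w * lam ^ (-θ)) ^ (1 / (1 - θ))) ^ (1 - θ) = w * lam ^ (-θ) := by
    rw [← Real.rpow_mul hwl, one_div, inv_mul_cancel₀ h1θ.ne', Real.rpow_one]
  have e2 : (lam * x) ^ θ = lam ^ θ * x ^ θ := Real.mul_rpow hlam.le hx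
  have e3 : lam ^ (-θ) * lam ^ θ = 1 := by
    rw [← Real.rpow_add hlam]; norm_num
  have e4 : (w * lam ^ (-θ)) ^ (1 / (1 - θ))
      = lam ^ (-(θ / (1 - θ))) * w ^ (1 / (1 - θ)) := by
    rw [Real.mul_rpow hw hlθ.le, ← Real.rpow_mul hlam.le,
      show (-θ) * (1 / (1 - θ)) = -(θ / (1 - θ)) by ring]
    exact mul_comm _ _
  rw [e1, e2] at hamgm
  rw [e4] at hamgm
  have lhs_eq : w * lam ^ (-θ) * (lam ^ θ * x ^ θ) = w * x ^ θ := by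
    calc w * lam ^ (-θ) * (lam ^ θ * x ^ θ)
        = (lam ^ (-θ) * lam ^ θ) * (w * x ^ θ) := by ring
      _ = w * x ^ θ := by rw [e3, one_mul]
  rw [lhs_eq] at hamgm
  linarith [hamgm]

set_option maxHeartbeats 1000000 in
/-- Generalized Grönwall inequality with relaxation, monotone data: decay bound on `H`. -/
theorem gronwall_relaxation_monotone_H_decay
    (C1 C2 θ η : ℝ) (hC1 : 0 < C1) (hC12 : C1 ≤ C2) (hθ : θ ∈ Set.Ioo (0:ℝ) 1)
    (hη : 0 < η) :
    ∃ C > (0:ℝ), ∀ (ω g H F : ℝ → ℝ),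
      (∀ t ≥ (0:ℝ), 0 ≤ ω t) →
      (∀ t ≥ (0:ℝ), 0 ≤ g t) →
      (∀ t ≥ (0:ℝ), 0 ≤ H t) →
      ContinuousOn F (Set.Ici 0) →
      (∀ t > (0:ℝ), DifferentiableAt ℝ F t) →
      (∀ t ≥ (0:ℝ), C1 * H t - g t ≤ F t) →
      (∀ t ≥ (0:ℝ), F t ≤ C2 * H t + g t) →
      (∀ t > (0:ℝ), deriv F t + η * F t ≤ ω t * H t ^ θ + g t) →
      AntitoneOn ω (Set.Ici 0) →
      AntitoneOn g (Set.Ici 0) →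
      ∀ t ≥ (0:ℝ),
        H t ≤ C * (max (F 0) 0 * Real.exp (-η * t / 2)
          + (η ^ (-(1/(1-θ))) * ω 0 ^ (1/(1-θ)) + (1 + 1/η) * g 0) * Real.exp (-η * t / 8)
          + η ^ (-(1/(1-θ))) * ω (t/2) ^ (1/(1-θ)) + (1 + 1/η) * g (t/2)) := by
  obtain ⟨hθ0, hθ1⟩ := hθ
  have h1θ : (0:ℝ) < 1 - θ := by linarith
  set r : ℝ := 1 / (1 - θ) with hr
  have hrpos : 0 < r := by positivity
  set lam : ℝ := η * C1 / (2 * θ) with hlam'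
  have hlam : 0 < lam := by positivity
  set K : ℝ := (1 - θ) * lam ^ (-(θ / (1 - θ))) with hK'
  have hKpos : 0 < K := by positivity
  set Q : ℝ := η ^ (-r) with hQ'
  have hQ : 0 < Q := Real.rpow_pos_of_pos hη _
  set P : ℝ := 2 * K / (η * Q) with hP'
  have hPpos : 0 < P := by positivity
  set v : ℝ := 1 / η with hv'
  have hvpos : 0 < v := by rw [hv']; positivity
  refine ⟨(P + 3) / C1, by positivity, ?_⟩
  intro ω g H F hω hg hH hFc hFd hlow hupp hdiff hωa hga
  set B : ℝ → ℝ := fun s => K * ω s ^ r + (1 + η / 2) * g s with hB'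
  have hBnn : ∀ s, 0 ≤ s → 0 ≤ B s := by
    intro s hs
    simp only [hB']
    have := Real.rpow_nonneg (hω s hs) r
    have := hg s hs
    positivity
  have hBanti : ∀ s s', 0 ≤ s → s ≤ s' → B s' ≤ B s := by
    intro s s' hs hss'
    have hs' : 0 ≤ s' := le_trans hs hss'
    have h1 : ω s' ≤ ω s := hωa hs hs' hss'
    have h2 : g s' ≤ g s := hga hs hs' hss'
    have h3 : ω s' ^ r ≤ ω s ^ r := Real.rpow_le_rpow (hω s' hs') h1 hrpos.le
    simp only [hB']
    have c2 : (0:ℝ) ≤ 1 + η / 2 := by positivity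
    nlinarith [mul_le_mul_of_nonneg_left h3 hKpos.le, mul_le_mul_of_nonneg_left h2 c2]
  have hkey : ∀ s, 0 < s → deriv F s + η / 2 * F s ≤ B s := by
    intro s hs
    have h1 := hdiff s hs
    have h2 := young_aux θ lam (ω s) (H s) hθ0 hθ1 hlam (hω s hs.le) (hH s hs.le)
    rw [← hr, ← hK'] at h2
    have h3 : θ * lam = η * C1 / 2 := by
      rw [hlam']; field_simp
    rw [h3] at h2
    have h4 : C1 * H s ≤ F s + g s := by linarith [hlow s hs.le]
    have h5 : η * C1 / 2 * H s ≤ η / 2 * (F s + g s) := by nlinarith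
    simp only [hB']
    linarith
  have hstep : ∀ t0 t1 : ℝ, 0 ≤ t0 → t0 ≤ t1 →
      F t1 ≤ F t0 * Real.exp (-(η / 2 * (t1 - t0))) + 2 * v * B t0 := by
    intro t0 t1 h0 ht
    apply gron_step F (η / 2) (2 * v * B t0) t0 t1 (by positivity)
      (mul_nonneg (by positivity) (hBnn t0 h0)) h0 ht hFc hFd
    intro s hs1 hs2
    have hs0 : 0 < s := lt_of_le_of_lt h0 hs1
    have hab : η / 2 * (2 * v * B t0) = B t0 := by rw [hv']; field_simp
    rw [hab]
    exact le_trans (hkey s hs0) (hBanti t0 s h0 hs1.le)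
  intro t ht
  have h1 := hstep 0 (t / 2) le_rfl (by linarith)
  have h2 := hstep (t / 2) t (by linarith) (by linarith)
  rw [show -(η / 2 * (t / 2 - 0)) = -(η * t / 4) by ring] at h1
  rw [show -(η / 2 * (t - t / 2)) = -(η * t / 4) by ring] at h2
  set e4 : ℝ := Real.exp (-(η * t / 4)) with he4'
  have e4pos : 0 < e4 := Real.exp_pos _
  have he44 : e4 * e4 = Real.exp (-η * t / 2) := by
    rw [he4', ← Real.exp_add]; congr 1; ring
  have he48 : e4 ≤ Real.exp (-η * t / 8) := by
    apply Real.exp_le_exp.2; nlinarith [mul_nonneg hη.le ht]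
  have hB0nn : 0 ≤ 2 * v * B 0 := mul_nonneg (by positivity) (hBnn 0 le_rfl)
  have hm1 : F (t / 2) * e4 ≤ (F 0 * e4 + 2 * v * B 0) * e4 :=
    mul_le_mul_of_nonneg_right h1 e4pos.le
  have hm2 : 2 * v * B 0 * e4 ≤ 2 * v * B 0 * Real.exp (-η * t / 8) :=
    mul_le_mul_of_nonneg_left he48 hB0nn
  have hm1' : F (t / 2) * e4 ≤ F 0 * Real.exp (-η * t / 2) + 2 * v * B 0 * e4 := by
    calc F (t / 2) * e4 ≤ (F 0 * e4 + 2 * v * B 0) * e4 := hm1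
      _ = F 0 * (e4 * e4) + 2 * v * B 0 * e4 := by ring
      _ = F 0 * Real.exp (-η * t / 2) + 2 * v * B 0 * e4 := by rw [he44]
  have hmax' : F 0 * Real.exp (-η * t / 2) ≤ max (F 0) 0 * Real.exp (-η * t / 2) :=
    mul_le_mul_of_nonneg_right (le_max_left _ _) (Real.exp_pos _).le
  have hcomb : F t ≤ max (F 0) 0 * Real.exp (-η * t / 2)
      + (2 * v * B 0) * Real.exp (-η * t / 8) + 2 * v * B (t / 2) := by
    linarith [h2, hm1', hm2, hmax']
  have hBid : ∀ s, 2 * v * B s = P * (Q * ω s ^ r) + (2 * v + 1) * g s := by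
    intro s
    simp only [hB']
    have hPQ : P * Q = 2 * K * v := by
      rw [hP', hv']; field_simp
    have h2η : 2 * v * (1 + η / 2) = 2 * v + 1 := by
      rw [hv']; field_simp
    calc 2 * v * (K * ω s ^ r + (1 + η / 2) * g s)
        = (2 * K * v) * ω s ^ r + (2 * v * (1 + η / 2)) * g s := by rw [hv']; ring
      _ = P * (Q * ω s ^ r) + (2 * v + 1) * g s := by rw [← hPQ, h2η]; ring
  rw [hBid 0, hBid (t / 2)] at hcomb
  clear_value v P Q K lam r B e4
  have hCH : C1 * H t ≤ F t + g t := by linarith [hlow t ht]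
  have hgt : g t ≤ g (t / 2) := hga (by simp; linarith) (by simpa using ht) (by linarith)
  -- nonnegativity facts
  have hA0 : 0 ≤ Q * ω 0 ^ r := mul_nonneg hQ.le (Real.rpow_nonneg (hω 0 le_rfl) r)
  have hA : 0 ≤ Q * ω (t / 2) ^ r :=
    mul_nonneg hQ.le (Real.rpow_nonneg (hω (t / 2) (by linarith)) r)
  have hG0 : 0 ≤ g 0 := hg 0 le_rfl
  have hGt : 0 ≤ g (t / 2) := hg (t / 2) (by linarith)
  have he8 : (0:ℝ) < Real.exp (-η * t / 8) := Real.exp_pos _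
  have hT1nn : 0 ≤ max (F 0) 0 * Real.exp (-η * t / 2) :=
    mul_nonneg (le_max_right _ _) (Real.exp_pos _).le
    -- per-term comparisons
  have k1 : max (F 0) 0 * Real.exp (-η * t / 2)
      ≤ (P + 3) * (max (F 0) 0 * Real.exp (-η * t / 2)) := by
    linarith [mul_nonneg hPpos.le hT1nn, hT1nn]
  have k2 : (P * (Q * ω 0 ^ r) + (2 * v + 1) * g 0) * Real.exp (-η * t / 8)
      ≤ (P + 3) * ((Q * ω 0 ^ r + (1 + v) * g 0) * Real.exp (-η * t / 8)) := by
    have inner : P * (Q * ω 0 ^ r) + (2 * v + 1) * g 0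
        ≤ (P + 3) * (Q * ω 0 ^ r + (1 + v) * g 0) := by
      linarith [mul_nonneg hPpos.le hG0, mul_nonneg (mul_nonneg hPpos.le hvpos.le) hG0,
        mul_nonneg hvpos.le hG0, hA0, hG0]
    calc (P * (Q * ω 0 ^ r) + (2 * v + 1) * g 0) * Real.exp (-η * t / 8)
        ≤ ((P + 3) * (Q * ω 0 ^ r + (1 + v) * g 0)) * Real.exp (-η * t / 8) :=
          mul_le_mul_of_nonneg_right inner he8.le
      _ = (P + 3) * ((Q * ω 0 ^ r + (1 + v) * g 0) * Real.exp (-η * t / 8)) := by ring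
  have k3 : P * (Q * ω (t / 2) ^ r) ≤ (P + 3) * (Q * ω (t / 2) ^ r) := by linarith [hA]
  have k4 : (2 * v + 1) * g (t / 2) + g (t / 2) ≤ (P + 3) * ((1 + v) * g (t / 2)) := by
    linarith [mul_nonneg hPpos.le hGt, mul_nonneg (mul_nonneg hPpos.le hvpos.le) hGt,
      mul_nonneg hvpos.le hGt, hGt]
  rw [div_mul_eq_mul_div, le_div_iff₀ hC1]
  have hexpand : (P + 3) * (max (F 0) 0 * Real.exp (-η * t / 2)
      + (Q * ω 0 ^ r + (1 + v) * g 0) * Real.exp (-η * t / 8)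
      + Q * ω (t / 2) ^ r + (1 + v) * g (t / 2))
      = (P + 3) * (max (F 0) 0 * Real.exp (-η * t / 2))
      + (P + 3) * ((Q * ω 0 ^ r + (1 + v) * g 0) * Real.exp (-η * t / 8))
      + (P + 3) * (Q * ω (t / 2) ^ r) + (P + 3) * ((1 + v) * g (t / 2)) := by ring
  linarith [hcomb, hCH, hgt, k1, k2, k3, k4, hexpand]
end

section
/- Let μ > 0 and λ ∈ [−1,0), and set b(τ) := μ(1+τ)^{−λ}. There exist constants c0 > 0, C > 0, K > 0 and T0 ≥ 0, depending only on μ and λ, with the following property: for every r with 0 ≤ r ≤ c0, every pair of times T0 ≤ s ≤ t, and every twice differentiable function y : ℝ → ℝ satisfying y″(τ) + r²·y(τ) + b(τ)·y′(τ) = 0 for all τ ∈ [s,t] with initial data y(s) = 1 and y′(s) = 0, one has |y(t)| ≤ K·exp( −C·r²·∫_s^t b(τ)^{−1} dτ ). -/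
/-!
For `r > 0` consider the modified energy `E = y'² + r² y² + r² y y' / (2 b)`. Along a solution, as
long as `r ≤ b` and `|b'| ≤ b²`, it obeys `E' ≤ -(r² / (10 b)) E`, and `E ≥ (3/4) r² y²`; since
`E(s) = r²`, integrating gives `y(t)² ≤ (4/3) exp(-(r²/10) ∫ₛᵗ b⁻¹)`. For `b = μ (1+τ)^(-λ)` both
conditions hold once `τ ≥ 1/μ` and `r ≤ μ`, because `b ≥ μ` and `b' = -λ b / (1+τ) ≤ μ b`.
For `r = 0`, `y'` solves `y'' = -b y'` with `y'(s) = 0`, so `y' ≡ 0` and `y ≡ 1`.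
-/

open Set Real

theorem le_mul_exp_neg_integral_of_hasDerivAt_le {E E' k : ℝ → ℝ} {s t : ℝ} (hst : s ≤ t)
    (hk : ContinuousOn k (Icc s t)) (hE : ∀ τ ∈ Icc s t, HasDerivAt E (E' τ) τ)
    (hE' : ∀ τ ∈ Ioo s t, E' τ ≤ -(k τ * E τ)) :
    E t ≤ E s * exp (-∫ τ in s..t, k τ) := by
  set K : ℝ → ℝ := fun σ => ∫ τ in s..σ, k τ
  have hK_cont : ContinuousOn K (Icc s t) := by
    simpa only [uIcc_of_le hst] using intervalIntegral.continuousOn_primitive_interval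
      (hk.mono (uIcc_of_le hst).subset).integrableOn_Icc
  have hK_deriv : ∀ τ ∈ Ioo s t, HasDerivAt K (k τ) τ := fun τ hτ =>
    intervalIntegral.integral_hasDerivAt_right
      ((hk.mono (Icc_subset_Icc_right hτ.2.le)).intervalIntegrable_of_Icc hτ.1.le)
      ((hk.mono Ioo_subset_Icc_self).stronglyMeasurableAtFilter isOpen_Ioo τ hτ)
      (hk.continuousAt (Icc_mem_nhds hτ.1 hτ.2))
  have hanti : AntitoneOn (fun σ => E σ * exp (K σ)) (Icc s t) := by
    refine antitoneOn_of_hasDerivWithinAt_nonpos (convex_Icc s t)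
      (fun τ hτ => ((hE τ hτ).continuousAt.continuousWithinAt).mul (hK_cont τ hτ).rexp)
      (f' := fun τ => (E' τ + k τ * E τ) * exp (K τ)) ?_ ?_ <;> rw [interior_Icc]
    · intro τ hτ
      exact ((hE τ (Ioo_subset_Icc_self hτ)).fun_mul
        (hK_deriv τ hτ).exp).hasDerivWithinAt.congr_deriv (by ring)
    · intro τ hτ
      exact mul_nonpos_of_nonpos_of_nonneg (by linarith [hE' τ hτ]) (exp_pos _).le
  have h := hanti (left_mem_Icc.2 hst) (right_mem_Icc.2 hst) hst
  simp only [K, intervalIntegral.integral_same, exp_zero, mul_one] at h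
  rw [exp_neg, ← div_eq_mul_inv, le_div_iff₀ (exp_pos _)]
  exact h

-- The cross term makes the potential part `r² p²` dissipate too: `q² + r² p²` alone only loses
-- `2 B q²` along `p' = q`, `q' = -r² p - B q`.
noncomputable def lyapunovEnergy (r B p q : ℝ) : ℝ :=
  q ^ 2 + r ^ 2 * p ^ 2 + r ^ 2 / 2 * (p * q / B)

theorem lyapunovEnergy_rate_le {r B B' p q : ℝ} (hB : 0 < B) (hr : 0 ≤ r) (hrB : r ≤ B)
    (hB' : |B'| ≤ B ^ 2) :
    2 * q * (-(r ^ 2 * p) - B * q) + r ^ 2 * (2 * p * q)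
        + r ^ 2 / 2 * ((q * q + p * (-(r ^ 2 * p) - B * q)) / B - p * q * B' / B ^ 2)
      ≤ -(r ^ 2 / 10 * B⁻¹ * lyapunovEnergy r B p q) := by
  -- the claim multiplied by `B²`
  have hcleared : -2 * B ^ 3 * q ^ 2 - r ^ 2 * B' * (p * q) / 2 + 3 / 5 * r ^ 2 * B * q ^ 2
      - 2 / 5 * r ^ 4 * B * p ^ 2 - r ^ 2 * B ^ 2 * (p * q) / 2 + r ^ 4 * (p * q) / 20 ≤ 0 := by
    have hr2 : r ^ 2 ≤ B ^ 2 := pow_le_pow_left₀ hr hrB 2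
    have hB'pq : -(B' * (p * q)) ≤ B ^ 2 * |p * q| := by
      calc -(B' * (p * q)) ≤ |B'| * |p * q| := (neg_le_abs _).trans (abs_mul _ _).le
        _ ≤ B ^ 2 * |p * q| := mul_le_mul_of_nonneg_right hB' (abs_nonneg _)
    rcases le_total 0 (p * q) with hpq | hpq
    · rw [abs_of_nonneg hpq] at hB'pq
      linarith [mul_nonneg (mul_nonneg hB.le (sq_nonneg q)) (sub_nonneg.mpr hr2),
        mul_nonneg hpq (mul_nonneg (sq_nonneg r) (sub_nonneg.mpr hr2)),
        mul_nonneg (sq_nonneg r) (sub_nonneg.mpr hB'pq),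
        mul_nonneg hB.le (sq_nonneg (B * q - r ^ 2 * p)),
        mul_nonneg (pow_nonneg hB.le 3) (sq_nonneg q), mul_nonneg hB.le (sq_nonneg (r ^ 2 * p))]
    · rw [abs_of_nonpos hpq] at hB'pq
      nlinarith [mul_nonneg hB.le (sq_nonneg (B * q + r ^ 2 * p / 2)),
        mul_nonneg (sq_nonneg r) (sub_nonneg.mpr hB'pq),
        mul_nonneg (neg_nonneg.mpr hpq) (pow_nonneg hr 4),
        mul_nonneg (neg_nonneg.mpr hpq) (mul_nonneg (sq_nonneg r) (sub_nonneg.mpr hr2)),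
        mul_nonneg (mul_nonneg hB.le (sq_nonneg q)) (sub_nonneg.mpr hr2)]
  rw [← sub_nonpos]
  unfold lyapunovEnergy
  field_simp
  linarith [hcleared]

theorem mul_sq_le_lyapunovEnergy {r B p q : ℝ} (hB : 0 < B) (hr : 0 ≤ r) (hrB : r ≤ B) :
    3 / 4 * (r ^ 2 * p ^ 2) ≤ lyapunovEnergy r B p q := by
  have hcross : -(r * |p * q|) ≤ r ^ 2 * (p * q / B) := by
    have hrB' : r ^ 2 / B ≤ r := by rw [div_le_iff₀ hB]; nlinarith
    rw [mul_div_left_comm]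
    nlinarith [neg_abs_le (p * q), abs_nonneg (p * q), div_nonneg (sq_nonneg r) hB.le]
  have hamgm : 2 * (r * |p * q|) ≤ q ^ 2 + r ^ 2 * p ^ 2 := by
    rw [abs_mul]
    nlinarith [sq_nonneg (|q| - r * |p|), sq_abs p, sq_abs q, abs_nonneg p]
  unfold lyapunovEnergy
  nlinarith [sq_nonneg q]

theorem hasDerivAt_lyapunovEnergy {b y y' : ℝ → ℝ} {r B' Q τ : ℝ} (hb : HasDerivAt b B' τ)
    (hbτ : b τ ≠ 0) (hy : HasDerivAt y (y' τ) τ) (hy' : HasDerivAt y' Q τ) :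
    HasDerivAt (fun σ => lyapunovEnergy r (b σ) (y σ) (y' σ))
      (2 * y' τ * Q + r ^ 2 * (2 * y τ * y' τ)
        + r ^ 2 / 2 * ((y' τ * y' τ + y τ * Q) / b τ - y τ * y' τ * B' / b τ ^ 2)) τ := by
  have := ((hy'.fun_pow 2).add ((hy.fun_pow 2).const_mul (r ^ 2))).add
    (((hy.fun_mul hy').fun_div hb hbτ).const_mul (r ^ 2 / 2))
  refine this.congr_deriv ?_
  field_simp
  ring

theorem sq_le_mul_exp_of_hasDerivAt {b b' y y' : ℝ → ℝ} {r s t : ℝ} (hst : s ≤ t) (hr : 0 < r)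
    (hb : ∀ τ ∈ Icc s t, HasDerivAt b (b' τ) τ) (hrb : ∀ τ ∈ Icc s t, r ≤ b τ)
    (hb' : ∀ τ ∈ Icc s t, |b' τ| ≤ b τ ^ 2) (hy : ∀ τ ∈ Icc s t, HasDerivAt y (y' τ) τ)
    (hy' : ∀ τ ∈ Icc s t, HasDerivAt y' (-(r ^ 2 * y τ) - b τ * y' τ) τ)
    (hys : y s = 1) (hy's : y' s = 0) :
    y t ^ 2 ≤ 4 / 3 * exp (-(r ^ 2 / 10 * ∫ τ in s..t, (b τ)⁻¹)) := by
  have hb0 : ∀ τ ∈ Icc s t, 0 < b τ := fun τ hτ => hr.trans_le (hrb τ hτ)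
  have hk : ContinuousOn (fun τ => r ^ 2 / 10 * (b τ)⁻¹) (Icc s t) :=
    continuousOn_const.mul <| ContinuousOn.inv₀
      (fun τ hτ => (hb τ hτ).continuousAt.continuousWithinAt) (fun τ hτ => (hb0 τ hτ).ne')
  have hdecay := le_mul_exp_neg_integral_of_hasDerivAt_le hst hk
    (fun τ hτ => hasDerivAt_lyapunovEnergy (hb τ hτ) (hb0 τ hτ).ne' (hy τ hτ) (hy' τ hτ))
    (fun τ hτ => lyapunovEnergy_rate_le (hb0 τ (Ioo_subset_Icc_self hτ)) hr.le
      (hrb τ (Ioo_subset_Icc_self hτ)) (hb' τ (Ioo_subset_Icc_self hτ)))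
  have hEs : lyapunovEnergy r (b s) (y s) (y' s) = r ^ 2 := by
    simp [lyapunovEnergy, hys, hy's]
  have hEt := mul_sq_le_lyapunovEnergy (p := y t) (q := y' t) (hb0 t (right_mem_Icc.2 hst)) hr.le
    (hrb t (right_mem_Icc.2 hst))
  rw [hEs, intervalIntegral.integral_const_mul] at hdecay
  refine le_of_mul_le_mul_left ?_ (pow_pos hr 2)
  linarith

theorem eq_of_hasDerivAt_deriv_eq_neg_mul {b y y' : ℝ → ℝ} {s t : ℝ} (hst : s ≤ t)
    (hb : ∀ τ ∈ Icc s t, 0 ≤ b τ) (hy : ∀ τ ∈ Icc s t, HasDerivAt y (y' τ) τ)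
    (hy' : ∀ τ ∈ Icc s t, HasDerivAt y' (-(b τ * y' τ)) τ) (hy's : y' s = 0) :
    y t = y s := by
  have hy'_zero : ∀ τ ∈ Icc s t, y' τ = 0 := by
    intro τ hτ
    have hsub : Icc s τ ⊆ Icc s t := Icc_subset_Icc_right hτ.2
    have h := le_mul_exp_neg_integral_of_hasDerivAt_le (E := fun σ => y' σ ^ 2) (k := 0) hτ.1
      continuousOn_const (fun σ hσ => (hy' σ (hsub hσ)).fun_pow 2)
      (fun σ hσ => by
        norm_num; linarith [mul_nonneg (hb σ (hsub (Ioo_subset_Icc_self hσ))) (sq_nonneg (y' σ))])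
    simp only [hy's] at h
    exact pow_eq_zero_iff two_ne_zero |>.mp (le_antisymm (by simpa using h) (sq_nonneg _))
  refine constant_of_has_deriv_right_zero (fun τ hτ => (hy τ hτ).continuousAt.continuousWithinAt)
    (fun τ hτ => ?_) t (right_mem_Icc.2 hst)
  simpa [hy'_zero τ (Ico_subset_Icc_self hτ)] using (hy τ (Ico_subset_Icc_self hτ)).hasDerivWithinAt

theorem abs_le_two_mul_exp_of_hasDerivAt {b b' y y' : ℝ → ℝ} {r s t : ℝ} (hst : s ≤ t)
    (hr : 0 ≤ r) (hb : ∀ τ ∈ Icc s t, HasDerivAt b (b' τ) τ) (hb0 : ∀ τ ∈ Icc s t, 0 < b τ)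
    (hrb : ∀ τ ∈ Icc s t, r ≤ b τ) (hb' : ∀ τ ∈ Icc s t, |b' τ| ≤ b τ ^ 2)
    (hy : ∀ τ ∈ Icc s t, HasDerivAt y (y' τ) τ)
    (hy' : ∀ τ ∈ Icc s t, HasDerivAt y' (-(r ^ 2 * y τ) - b τ * y' τ) τ)
    (hys : y s = 1) (hy's : y' s = 0) :
    |y t| ≤ 2 * exp (-(1 / 20) * r ^ 2 * ∫ τ in s..t, (b τ)⁻¹) := by
  rcases hr.eq_or_lt with rfl | hr
  · have hconst := eq_of_hasDerivAt_deriv_eq_neg_mul hst (fun τ hτ => (hb0 τ hτ).le) hy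
      (fun τ hτ => by simpa using hy' τ hτ) hy's
    norm_num [hconst, hys]
  · refine abs_le_of_sq_le_sq ?_ (by positivity)
    calc y t ^ 2 ≤ 4 / 3 * exp (-(r ^ 2 / 10 * ∫ τ in s..t, (b τ)⁻¹)) :=
          sq_le_mul_exp_of_hasDerivAt hst hr hb hrb hb' hy hy' hys hy's
      _ ≤ (2 * exp (-(1 / 20) * r ^ 2 * ∫ τ in s..t, (b τ)⁻¹)) ^ 2 := by
          rw [mul_pow, ← exp_nat_mul]
          have hexp : ((2 : ℕ) : ℝ) * (-(1 / 20) * r ^ 2 * ∫ τ in s..t, (b τ)⁻¹)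
              = -(r ^ 2 / 10 * ∫ τ in s..t, (b τ)⁻¹) := by push_cast; ring
          rw [hexp]
          linarith [exp_pos (-(r ^ 2 / 10 * ∫ τ in s..t, (b τ)⁻¹))]

theorem hasDerivAt_mul_one_add_rpow (μ lam : ℝ) {τ : ℝ} (hτ : -1 < τ) :
    HasDerivAt (fun σ => μ * (1 + σ) ^ (-lam)) (μ * (-lam * (1 + τ) ^ (-lam - 1))) τ :=
  ((((hasDerivAt_id τ).const_add 1).rpow_const (Or.inl (by simp only [id]; linarith))).const_mul
    μ).congr_deriv (by simp)

theorem le_mul_one_add_rpow_neg {μ lam τ : ℝ} (hμ : 0 ≤ μ) (hlam : lam ≤ 0) (hτ : 0 ≤ τ) :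
    μ ≤ μ * (1 + τ) ^ (-lam) :=
  le_mul_of_one_le_right hμ (one_le_rpow (by linarith) (by linarith))

theorem abs_deriv_mul_one_add_rpow_neg_le_sq {μ lam τ : ℝ} (hμ : 0 < μ) (hlam : lam ∈ Icc (-1) 0)
    (hτ : 0 ≤ τ) (hτμ : μ⁻¹ ≤ 1 + τ) :
    |μ * (-lam * (1 + τ) ^ (-lam - 1))| ≤ (μ * (1 + τ) ^ (-lam)) ^ 2 := by
  obtain ⟨hlam1, hlam0⟩ := hlam
  have hτ1 : 0 < 1 + τ := by linarith
  set b := μ * (1 + τ) ^ (-lam)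
  have hb : μ ≤ b := le_mul_one_add_rpow_neg hμ.le hlam0 hτ
  have hsplit : μ * (-lam * (1 + τ) ^ (-lam - 1)) = -lam * b * (1 + τ)⁻¹ := by
    rw [rpow_sub hτ1, rpow_one]; ring
  have hb0 : 0 < b := hμ.trans_le hb
  have hlam' : 0 ≤ -lam := by linarith
  have hinv : (1 + τ)⁻¹ ≤ μ := by
    rw [inv_le_comm₀ hτ1 hμ]; exact hτμ
  rw [hsplit, abs_of_nonneg (by positivity), sq]
  calc -lam * b * (1 + τ)⁻¹ ≤ 1 * b * μ := by gcongr; linarith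
    _ ≤ b * b := by nlinarith

/-- Low-frequency upper bound on the Fourier multiplier `Φ₁ᵛ(t,s,r)` of the
damped wave equation `∂_t²v − Δv + b(t)∂_t v = 0` with `b(τ) = μ(1+τ)^(−λ)`. -/
theorem Phi1v_low_frequency_upper_bound
    (μ lam : ℝ) (hμ : 0 < μ) (hlam : lam ∈ Set.Ico (-1:ℝ) 0) :
    ∃ c0 > (0:ℝ), ∃ C > (0:ℝ), ∃ K > (0:ℝ), ∃ T0 ≥ (0:ℝ),
      ∀ r : ℝ, 0 ≤ r → r ≤ c0 → ∀ s t : ℝ, T0 ≤ s → s ≤ t →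
        ∀ y : ℝ → ℝ,
          (∀ τ : ℝ, DifferentiableAt ℝ y τ) →
          (∀ τ : ℝ, DifferentiableAt ℝ (deriv y) τ) →
          (∀ τ ∈ Set.Icc s t,
            deriv (deriv y) τ + r^2 * y τ + (μ * (1+τ)^(-lam)) * deriv y τ = 0) →
          y s = 1 → deriv y s = 0 →
          |y t| ≤ K * Real.exp (-C * r^2 * ∫ τ in s..t, (μ * (1+τ)^(-lam))⁻¹) := by
  refine ⟨μ, hμ, 1 / 20, by norm_num, 2, by norm_num, μ⁻¹, by positivity, ?_⟩
  intro r hr hrμ s t hs hst y hy hy' hode hys hy's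
  have hμ_inv : 0 < μ⁻¹ := inv_pos.2 hμ
  have hτ0 : ∀ τ ∈ Icc s t, 0 ≤ τ := fun τ hτ => by linarith [hτ.1]
  have hτμ : ∀ τ ∈ Icc s t, μ⁻¹ ≤ 1 + τ := fun τ hτ => by linarith [hτ.1]
  have hbμ : ∀ τ ∈ Icc s t, μ ≤ μ * (1 + τ) ^ (-lam) := fun τ hτ =>
    le_mul_one_add_rpow_neg hμ.le hlam.2.le (hτ0 τ hτ)
  exact abs_le_two_mul_exp_of_hasDerivAt hst hr
    (fun τ hτ => hasDerivAt_mul_one_add_rpow μ lam (by linarith [hτ0 τ hτ]))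
    (fun τ hτ => hμ.trans_le (hbμ τ hτ)) (fun τ hτ => hrμ.trans (hbμ τ hτ))
    (fun τ hτ => abs_deriv_mul_one_add_rpow_neg_le_sq hμ (Ico_subset_Icc_self hlam)
      (hτ0 τ hτ) (hτμ τ hτ))
    (fun τ _ => (hy τ).hasDerivAt)
    (fun τ hτ => (hy' τ).hasDerivAt.congr_deriv (by linarith [hode τ hτ])) hys hy's
end

section
/- Let μ > 0 and λ ∈ [−1,0), and set b(τ) := μ(1+τ)^{−λ}. There exist constants c0 > 0, C > 0, K > 0 and T0 ≥ 0, depending only on μ and λ, with the following property: for every r with 0 ≤ r ≤ c0, every pair of times T0 ≤ s ≤ t, and every twice differentiable function y : ℝ → ℝ satisfying y″(τ) + r²·y(τ) + b(τ)·y′(τ) = 0 for all τ ∈ [s,t] with initial data y(s) = 0 and y′(s) = 1, one has |y(t)| ≤ (K / b(s))·exp( −C·r²·∫_s^t b(τ)^{−1} dτ ). -/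
/-!
Write `B' = b` and `e = y' / b`. Up to time `s + 1 / r` the integrating factor,
`(exp B · y')' = -r² exp B · y`, and a bootstrap on `max |y|` give `|y| ≤ 2 / b(s)`, while the
energy `y'² + r² y²` is nonincreasing, so `|y'| ≤ 1`. After that time `τ b' ≤ b` gives
`b' ≤ r b`, and then the Lyapunov function `V = y² + 2 y e + 3 e² = (y + e)² + 2 e²` satisfies
`V' ≤ -(r² / 2b) V`; as `y² ≤ 2 V`, `y` decays like `exp (-(r² / 4) ∫ b⁻¹)`.
-/

open Set Real intervalIntegral

lemma le_of_hasDerivAt_nonpos {f f' : ℝ → ℝ} {a c : ℝ} (hac : a ≤ c)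
    (hf : ContinuousOn f (Icc a c)) (hf' : ∀ x ∈ Ioo a c, HasDerivAt f (f' x) x)
    (hneg : ∀ x ∈ Ioo a c, f' x ≤ 0) : f c ≤ f a := by
  refine antitoneOn_of_hasDerivWithinAt_nonpos (f' := f') (convex_Icc a c) hf ?_ ?_
    (left_mem_Icc.2 hac) (right_mem_Icc.2 hac) hac
  · simpa only [interior_Icc] using fun x hx => (hf' x hx).hasDerivWithinAt
  · simpa only [interior_Icc] using hneg

lemma hasDerivAt_integral_of_continuousOn {f : ℝ → ℝ} {a c x : ℝ}
    (hf : ContinuousOn f (Icc a c)) (hx : x ∈ Ioo a c) :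
    HasDerivAt (fun u => ∫ v in a..u, f v) (f x) x :=
  integral_hasDerivAt_right
    ((hf.mono (Icc_subset_Icc_right hx.2.le)).intervalIntegrable_of_Icc hx.1.le)
    ((hf.mono Ioo_subset_Icc_self).stronglyMeasurableAtFilter isOpen_Ioo x hx)
    (hf.continuousAt (Icc_mem_nhds hx.1 hx.2))

lemma continuousOn_integral_of_continuousOn {f : ℝ → ℝ} {a c : ℝ} (hac : a ≤ c)
    (hf : ContinuousOn f (Icc a c)) :
    ContinuousOn (fun u => ∫ v in a..u, f v) (Icc a c) := by
  rw [← uIcc_of_le hac] at hf ⊢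
  exact continuousOn_primitive_interval (hf.integrableOn_compact isCompact_uIcc)

lemma mul_integral_le_sub_of_hasDerivAt {b F g : ℝ → ℝ} {a c : ℝ} (hac : a ≤ c)
    (hb : ContinuousOn b (Icc a c)) (hmono : ∀ x ∈ Icc a c, b a ≤ b x)
    (hg : ContinuousOn g (Icc a c)) (hg0 : ∀ x ∈ Icc a c, 0 ≤ g x)
    (hF : ContinuousOn F (Icc a c)) (hF' : ∀ x ∈ Ioo a c, HasDerivAt F (b x * g x) x) :
    b a * ∫ v in a..c, g v ≤ F c - F a := by
  rw [← integral_eq_sub_of_hasDerivAt_of_le hac hF hF'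
    ((hb.mul hg).intervalIntegrable_of_Icc hac), ← integral_const_mul]
  refine integral_mono_on hac ((continuousOn_const.mul hg).intervalIntegrable_of_Icc hac)
    ((hb.mul hg).intervalIntegrable_of_Icc hac) fun x hx => ?_
  exact mul_le_mul_of_nonneg_right (hmono x hx) (hg0 x hx)

section IntegratingFactor

variable {b : ℝ → ℝ} {s t : ℝ}

lemma integral_exp_integral_le (hst : s ≤ t) (hb : ContinuousOn b (Icc s t)) (hbs : 0 < b s)
    (hmono : ∀ x ∈ Icc s t, b s ≤ b x) :
    ∫ v in s..t, exp (∫ w in s..v, b w) ≤ exp (∫ w in s..t, b w) / b s := by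
  have hB := (continuousOn_integral_of_continuousOn hst hb).rexp
  rw [le_div_iff₀' hbs]
  refine (mul_integral_le_sub_of_hasDerivAt hst hb hmono hB (fun _ _ => (exp_pos _).le) hB
    fun x hx => (hasDerivAt_integral_of_continuousOn hb hx).exp.congr_deriv (mul_comm _ _)).trans ?_
  simp

lemma integral_exp_neg_integral_le (hst : s ≤ t) (hb : ContinuousOn b (Icc s t))
    (hbs : 0 < b s) (hmono : ∀ x ∈ Icc s t, b s ≤ b x) :
    ∫ v in s..t, exp (-∫ w in s..v, b w) ≤ 1 / b s := by
  have hB : ContinuousOn (fun u => exp (-∫ v in s..u, b v)) (Icc s t) :=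
    (continuousOn_integral_of_continuousOn hst hb).neg.rexp
  rw [le_div_iff₀' hbs]
  refine (mul_integral_le_sub_of_hasDerivAt hst hb hmono hB (fun _ _ => (exp_pos _).le) hB.neg
    fun x hx => ((hasDerivAt_integral_of_continuousOn hb hx).fun_neg.exp.fun_neg).congr_deriv
      (by ring)).trans ?_
  simp [(exp_pos _).le]

end IntegratingFactor

structure AdmissibleDamping (b b' : ℝ → ℝ) (μ : ℝ) (I : Set ℝ) : Prop where
  hasDerivAt : ∀ x ∈ I, HasDerivAt b (b' x) x
  le : ∀ x ∈ I, μ ≤ b x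
  deriv_nonneg : ∀ x ∈ I, 0 ≤ b' x
  mul_deriv_le : ∀ x ∈ I, x * b' x ≤ b x

namespace AdmissibleDamping

variable {b b' : ℝ → ℝ} {μ s t : ℝ} {I : Set ℝ}

lemma mono {J : Set ℝ} (hd : AdmissibleDamping b b' μ I) (hJ : J ⊆ I) :
    AdmissibleDamping b b' μ J :=
  ⟨fun x hx => hd.hasDerivAt x (hJ hx), fun x hx => hd.le x (hJ hx),
    fun x hx => hd.deriv_nonneg x (hJ hx), fun x hx => hd.mul_deriv_le x (hJ hx)⟩

lemma continuousOn (hd : AdmissibleDamping b b' μ I) : ContinuousOn b I :=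
  fun x hx => (hd.hasDerivAt x hx).continuousAt.continuousWithinAt

lemma left_le (hd : AdmissibleDamping b b' μ (Icc s t)) {x : ℝ} (hx : x ∈ Icc s t) : b s ≤ b x :=
  monotoneOn_of_hasDerivWithinAt_nonneg (convex_Icc s t) hd.continuousOn
    (fun x hx => (hd.hasDerivAt x (interior_subset hx)).hasDerivWithinAt)
    (fun x hx => hd.deriv_nonneg x (interior_subset hx)) (left_mem_Icc.2 (hx.1.trans hx.2)) hx hx.1

lemma deriv_le_mul (hd : AdmissibleDamping b b' μ I) {r x : ℝ} (hx : x ∈ I) (hr : 0 ≤ r)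
    (hrx : 1 ≤ r * x) : b' x ≤ r * b x := by
  nlinarith [mul_le_mul_of_nonneg_left hrx (hd.deriv_nonneg x hx),
    mul_le_mul_of_nonneg_left (hd.mul_deriv_le x hx) hr]

lemma continuousOn_inv (hd : AdmissibleDamping b b' μ I) (hμ : 0 < μ) :
    ContinuousOn (fun τ => (b τ)⁻¹) I :=
  hd.continuousOn.inv₀ fun x hx => (hμ.trans_le (hd.le x hx)).ne'

lemma integral_inv_le (hd : AdmissibleDamping b b' μ (Icc s t)) (hμ : 0 < μ) (hst : s ≤ t) :
    ∫ τ in s..t, (b τ)⁻¹ ≤ (t - s) / μ := by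
  have := integral_mono_on (μ := MeasureTheory.volume) hst
    ((hd.continuousOn_inv hμ).intervalIntegrable_of_Icc hst) intervalIntegrable_const
    fun x hx => inv_anti₀ hμ (hd.le x hx)
  rwa [integral_const, smul_eq_mul, ← div_eq_mul_inv] at this

lemma sq_mul_integral_inv_le (hd : AdmissibleDamping b b' μ (Icc s t)) (hμ : 0 < μ) (hst : s ≤ t)
    {r : ℝ} (hr0 : 0 ≤ r) (hr : 5 * r ≤ μ) (hshort : r * (t - s) ≤ 1) :
    r ^ 2 * ∫ τ in s..t, (b τ)⁻¹ ≤ 1 / 5 := by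
  refine (mul_le_mul_of_nonneg_left (hd.integral_inv_le hμ hst) (sq_nonneg r)).trans ?_
  rw [← mul_div_assoc, div_le_iff₀ hμ]
  nlinarith [mul_le_mul_of_nonneg_left hshort hr0]

end AdmissibleDamping

lemma admissibleDamping_rpow {μ lam : ℝ} (hμ : 0 < μ) (hlam : lam ∈ Icc (-1) 0) :
    AdmissibleDamping (fun τ => μ * (1 + τ) ^ (-lam))
      (fun τ => μ * (-lam * (1 + τ) ^ (-lam - 1))) μ (Ici 0) where
  hasDerivAt x hx := by
    have hx1 : 1 + x ≠ 0 := by linarith [mem_Ici.1 hx]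
    simpa using (((hasDerivAt_id x).const_add 1).rpow_const (p := -lam) (Or.inl hx1)).const_mul μ
  le x hx := le_mul_of_one_le_right hμ.le (one_le_rpow (by linarith [mem_Ici.1 hx])
    (by linarith [hlam.2]))
  deriv_nonneg x hx := mul_nonneg hμ.le
    (mul_nonneg (by linarith [hlam.2]) (rpow_nonneg (by linarith [mem_Ici.1 hx]) _))
  mul_deriv_le x hx := by
    have hx1 : 0 < 1 + x := by linarith [mem_Ici.1 hx]
    have hpow : 0 < (1 + x) ^ (-lam) := rpow_pos_of_pos hx1 _
    rw [rpow_sub_one hx1.ne', ← mul_le_mul_iff_left₀ hx1]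
    field_simp
    nlinarith [hlam.1, hlam.2, mul_pos hμ hpow, mem_Ici.1 hx]

noncomputable def lyapunov (b y : ℝ → ℝ) (τ : ℝ) : ℝ :=
  y τ ^ 2 + 2 * y τ * (deriv y τ / b τ) + 3 * (deriv y τ / b τ) ^ 2

-- `b (V' + (r² / 2b) V)` for `V = lyapunov b y`, written in `β = b`, `β' = b'`, `a = y`,
-- `e = y' / b` after eliminating `y''` by the equation
lemma lyapunov_rate_nonpos {β β' r a e : ℝ} (hβ'0 : 0 ≤ β') (hβ'r : β' ≤ r * β) (hr : 0 ≤ r)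
    (h5r : 5 * r ≤ β) :
    -4 * β ^ 2 * e ^ 2 - 3 / 2 * r ^ 2 * a ^ 2 - 2 * β' * a * e - 5 * r ^ 2 * a * e
      - 6 * β' * e ^ 2 + 3 / 2 * r ^ 2 * e ^ 2 ≤ 0 := by
  have hβ : 0 ≤ β := by linarith
  have hrβ : r * r ≤ β * β := mul_le_mul (by linarith) (by linarith) hr hβ
  rcases le_total 0 (a * e) with hae | hae
  · nlinarith [mul_nonneg hβ'0 hae, mul_nonneg (sq_nonneg r) hae, mul_nonneg hβ'0 (sq_nonneg e),
      sq_nonneg e]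
  · nlinarith [mul_nonneg (sub_nonneg.2 hβ'r) (neg_nonneg.2 hae),
      mul_nonneg (mul_nonneg (sub_nonneg.2 h5r) hr) (neg_nonneg.2 hae),
      sq_nonneg (r * a + β * e), mul_nonneg hβ'0 (sq_nonneg e), sq_nonneg e]

lemma sq_le_two_mul_lyapunov (b y : ℝ → ℝ) (τ : ℝ) : y τ ^ 2 ≤ 2 * lyapunov b y τ := by
  unfold lyapunov
  nlinarith [sq_nonneg (y τ + 2 * (deriv y τ / b τ)), sq_nonneg (deriv y τ / b τ)]

lemma lyapunov_le_of_abs_le {b y : ℝ → ℝ} {τ β : ℝ} (hβ : 0 < β) (hβb : β ≤ b τ)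
    (hy : |y τ| ≤ 2 / β) (hy' : |deriv y τ| ≤ 1) : lyapunov b y τ ≤ 11 / β ^ 2 := by
  have he : |deriv y τ / b τ| ≤ 1 / β := by
    rw [abs_div, abs_of_pos (hβ.trans_le hβb)]
    exact div_le_div₀ zero_le_one hy' hβ hβb
  calc lyapunov b y τ
      ≤ |y τ| ^ 2 + 2 * |y τ| * |deriv y τ / b τ| + 3 * |deriv y τ / b τ| ^ 2 := by
        rw [lyapunov, sq_abs, sq_abs, mul_assoc, mul_assoc, ← abs_mul]
        gcongr
        exact le_abs_self _
    _ ≤ (2 / β) ^ 2 + 2 * (2 / β) * (1 / β) + 3 * (1 / β) ^ 2 := by gcongr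
    _ = 11 / β ^ 2 := by ring

lemma abs_le_mul_exp_of_sq_le {Y β r I₁ I₂ : ℝ} (hβ : 0 < β) (hI₁ : r ^ 2 * I₁ ≤ 1 / 5)
    (hY : Y ^ 2 ≤ 22 / β ^ 2 * exp (-(r ^ 2 / 2 * I₂))) :
    |Y| ≤ 8 / β * exp (-(1 / 4) * r ^ 2 * (I₁ + I₂)) := by
  have hexp : 9 / 10 ≤ exp (-(1 / 2) * r ^ 2 * I₁) := by
    linarith [add_one_le_exp (-(1 / 2) * r ^ 2 * I₁)]
  refine abs_le_of_sq_le_sq (hY.trans ?_) (by positivity)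
  calc 22 / β ^ 2 * exp (-(r ^ 2 / 2 * I₂))
      ≤ 64 / β ^ 2 * (9 / 10) * exp (-(r ^ 2 / 2 * I₂)) := by
        gcongr
        rw [div_mul_eq_mul_div]
        gcongr
        norm_num
    _ ≤ 64 / β ^ 2 * exp (-(1 / 2) * r ^ 2 * I₁) * exp (-(r ^ 2 / 2 * I₂)) := by gcongr
    _ = (8 / β * exp (-(1 / 4) * r ^ 2 * (I₁ + I₂))) ^ 2 := by
        rw [mul_pow, ← exp_nat_mul, mul_assoc, ← exp_add, div_pow]
        ring_nf

structure SolvesDampedOscillator (b : ℝ → ℝ) (r : ℝ) (y : ℝ → ℝ) (I : Set ℝ) : Prop where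
  differentiable : Differentiable ℝ y
  differentiable_deriv : Differentiable ℝ (deriv y)
  ode : ∀ τ ∈ I, deriv (deriv y) τ + r ^ 2 * y τ + b τ * deriv y τ = 0

namespace SolvesDampedOscillator

variable {b y : ℝ → ℝ} {r s t : ℝ} {I : Set ℝ}

lemma mono {J : Set ℝ} (h : SolvesDampedOscillator b r y I) (hJ : J ⊆ I) :
    SolvesDampedOscillator b r y J :=
  ⟨h.differentiable, h.differentiable_deriv, fun τ hτ => h.ode τ (hJ hτ)⟩

lemma deriv_deriv_eq (h : SolvesDampedOscillator b r y I) {τ : ℝ} (hτ : τ ∈ I) :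
    deriv (deriv y) τ = -(r ^ 2 * y τ) - b τ * deriv y τ := by
  linarith [h.ode τ hτ]

lemma deriv_sq_add_sq_le (h : SolvesDampedOscillator b r y (Icc s t)) (hst : s ≤ t)
    (hb : ∀ x ∈ Icc s t, 0 ≤ b x) :
    deriv y t ^ 2 + r ^ 2 * y t ^ 2 ≤ deriv y s ^ 2 + r ^ 2 * y s ^ 2 := by
  have hE : ∀ x, HasDerivAt (fun τ => deriv y τ ^ 2 + r ^ 2 * y τ ^ 2)
      (2 * deriv y x * deriv (deriv y) x + r ^ 2 * (2 * y x * deriv y x)) x := fun x => by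
    refine (((h.differentiable_deriv x).hasDerivAt.fun_pow 2).add
      (((h.differentiable x).hasDerivAt.fun_pow 2).const_mul (r ^ 2))).congr_deriv ?_
    push_cast
    ring
  refine le_of_hasDerivAt_nonpos hst
    (fun x _ => (hE x).continuousAt.continuousWithinAt) (fun x _ => hE x) fun x hx => ?_
  rw [h.deriv_deriv_eq (Ioo_subset_Icc_self hx)]
  nlinarith [mul_nonneg (hb x (Ioo_subset_Icc_self hx)) (sq_nonneg (deriv y x))]

lemma exp_integral_mul_deriv_eq (h : SolvesDampedOscillator b r y (Icc s t)) (hst : s ≤ t)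
    (hb : ContinuousOn b (Icc s t)) :
    exp (∫ v in s..t, b v) * deriv y t
      = deriv y s - r ^ 2 * ∫ v in s..t, exp (∫ w in s..v, b w) * y v := by
  have hB := (continuousOn_integral_of_continuousOn hst hb).rexp
  have hFTC := integral_eq_sub_of_hasDerivAt_of_le hst
    (f := fun u => exp (∫ w in s..u, b w) * deriv y u)
    (f' := fun u => -r ^ 2 * (exp (∫ w in s..u, b w) * y u))
    (hB.mul h.differentiable_deriv.continuous.continuousOn)
    (fun x hx => ((hasDerivAt_integral_of_continuousOn hb hx).exp.mul
      (h.differentiable_deriv x).hasDerivAt).congr_deriv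
        (by rw [h.deriv_deriv_eq (Ioo_subset_Icc_self hx)]; ring))
    ((hB.mul h.differentiable.continuous.continuousOn).const_mul (-r ^ 2)
      |>.intervalIntegrable_of_Icc hst)
  simp only [integral_const_mul, integral_same, exp_zero, one_mul] at hFTC
  linarith

lemma abs_deriv_le (h : SolvesDampedOscillator b r y (Icc s t)) (hst : s ≤ t)
    (hb : ContinuousOn b (Icc s t)) (hbs : 0 < b s) (hmono : ∀ x ∈ Icc s t, b s ≤ b x)
    (hy's : deriv y s = 1) {M : ℝ} (hM : ∀ v ∈ Icc s t, |y v| ≤ M) :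
    |deriv y t| ≤ exp (-∫ v in s..t, b v) + r ^ 2 * M / b s := by
  set B := fun u => ∫ v in s..u, b v
  have hB := (continuousOn_integral_of_continuousOn hst hb).rexp
  have hint : |∫ v in s..t, exp (B v) * y v| ≤ M * (exp (B t) / b s) := calc
    |∫ v in s..t, exp (B v) * y v| ≤ ∫ v in s..t, M * exp (B v) := by
      refine (abs_integral_le_integral_abs hst).trans (integral_mono_on hst
        ((hB.mul h.differentiable.continuous.continuousOn).abs.intervalIntegrable_of_Icc hst)
        ((hB.const_mul M).intervalIntegrable_of_Icc hst) fun v hv => ?_)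
      rw [abs_mul, abs_of_pos (exp_pos _), mul_comm]
      exact mul_le_mul_of_nonneg_right (hM v hv) (exp_pos _).le
    _ ≤ M * (exp (B t) / b s) := by
      rw [integral_const_mul]
      exact mul_le_mul_of_nonneg_left (integral_exp_integral_le hst hb hbs hmono)
        ((abs_nonneg _).trans (hM s (left_mem_Icc.2 hst)))
  have hderiv : deriv y t = exp (-B t) * (1 - r ^ 2 * ∫ v in s..t, exp (B v) * y v) := by
    rw [← hy's, ← h.exp_integral_mul_deriv_eq hst hb, exp_neg,
      inv_mul_cancel_left₀ (exp_pos _).ne']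
  calc |deriv y t| ≤ exp (-B t) * (1 + r ^ 2 * (M * (exp (B t) / b s))) := by
        rw [hderiv, abs_mul, abs_of_pos (exp_pos _)]
        refine mul_le_mul_of_nonneg_left ((abs_sub _ _).trans ?_) (exp_pos _).le
        rw [abs_one, abs_mul, abs_of_nonneg (sq_nonneg r)]
        gcongr
    _ = exp (-B t) + r ^ 2 * M / b s := by
        rw [exp_neg]
        field_simp

lemma abs_le_two_div_of_short_time (h : SolvesDampedOscillator b r y (Icc s t)) (hst : s ≤ t)
    (hb : ContinuousOn b (Icc s t)) (hbs : 0 < b s) (hmono : ∀ x ∈ Icc s t, b s ≤ b x)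
    (hys : y s = 0) (hy's : deriv y s = 1) (hshort : 2 * r ^ 2 * (t - s) ≤ b s) :
    ∀ u ∈ Icc s t, |y u| ≤ 2 / b s := by
  obtain ⟨τ, hτ, hmax⟩ := isCompact_Icc.exists_isMaxOn (nonempty_Icc.2 hst)
    h.differentiable.continuous.abs.continuousOn
  set M := |y τ|
  have hsub : ∀ {u}, u ∈ Icc s τ → Icc s u ⊆ Icc s t := fun hu =>
    Icc_subset_Icc_right (hu.2.trans hτ.2)
  have hderiv : ∀ u ∈ Icc s τ, |deriv y u| ≤ exp (-∫ v in s..u, b v) + r ^ 2 * M / b s :=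
    fun u hu => abs_deriv_le (h.mono (hsub hu)) hu.1 (hb.mono (hsub hu)) hbs
      (fun x hx => hmono x (hsub hu hx)) hy's (fun v hv => hmax (hsub hu hv))
  have hB : ContinuousOn (fun u => exp (-∫ v in s..u, b v)) (Icc s τ) :=
    (continuousOn_integral_of_continuousOn hτ.1 (hb.mono (hsub (right_mem_Icc.2 hτ.1)))).neg.rexp
  have hM : M ≤ 1 / b s + r ^ 2 * (τ - s) / b s * M := calc
    M = |∫ u in s..τ, deriv y u| := by
        rw [integral_deriv_eq_sub (fun x _ => h.differentiable x)
          (h.differentiable_deriv.continuous.intervalIntegrable _ _), hys, sub_zero]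
    _ ≤ ∫ u in s..τ, (exp (-∫ v in s..u, b v) + r ^ 2 * M / b s) :=
        (abs_integral_le_integral_abs hτ.1).trans (integral_mono_on hτ.1
          (h.differentiable_deriv.continuous.abs.intervalIntegrable _ _)
          ((hB.add continuousOn_const).intervalIntegrable_of_Icc hτ.1) hderiv)
    _ ≤ 1 / b s + r ^ 2 * (τ - s) / b s * M := by
        rw [integral_add (hB.intervalIntegrable_of_Icc hτ.1) intervalIntegrable_const,
          integral_const, smul_eq_mul]
        have := integral_exp_neg_integral_le hτ.1 (hb.mono (hsub (right_mem_Icc.2 hτ.1))) hbs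
          fun x hx => hmono x (hsub (right_mem_Icc.2 hτ.1) hx)
        have : (τ - s) * (r ^ 2 * M / b s) = r ^ 2 * (τ - s) / b s * M := by ring
        linarith
  have hcoef : r ^ 2 * (τ - s) / b s * M ≤ 1 / 2 * M := by
    refine mul_le_mul_of_nonneg_right ?_ (abs_nonneg _)
    rw [div_le_iff₀ hbs]
    nlinarith [mul_le_mul_of_nonneg_left (sub_le_sub_right hτ.2 s) (sq_nonneg r)]
  intro u hu
  have hu' : |y u| ≤ M := hmax hu
  have : 2 / b s = 2 * (1 / b s) := by ring
  linarith

lemma deriv_lyapunov_add_le (h : SolvesDampedOscillator b r y I) {x β' : ℝ}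
    (hx : x ∈ I) (hb : HasDerivAt b β' x) (hbx : 0 < b x) (hβ'0 : 0 ≤ β')
    (hβ'r : β' ≤ r * b x) (hr : 0 ≤ r) (h5r : 5 * r ≤ b x) :
    DifferentiableAt ℝ (lyapunov b y) x ∧
      deriv (lyapunov b y) x + r ^ 2 / 2 * (b x)⁻¹ * lyapunov b y x ≤ 0 := by
  have he := (h.differentiable_deriv x).hasDerivAt.div hb hbx.ne'
  have hV := (((h.differentiable x).hasDerivAt.fun_pow 2).add
    (((h.differentiable x).hasDerivAt.const_mul 2).mul he)).add ((he.fun_pow 2).const_mul 3)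
  refine ⟨hV.differentiableAt, hV.deriv ▸ nonpos_of_mul_nonpos_left (Eq.trans_le ?_
    (lyapunov_rate_nonpos (a := y x) (e := deriv y x / b x) hβ'0 hβ'r hr h5r)) hbx⟩
  have := hbx.ne'
  simp only [Pi.div_apply, h.deriv_deriv_eq hx, lyapunov]
  push_cast
  field_simp
  ring

lemma lyapunov_mul_exp_le (h : SolvesDampedOscillator b r y (Icc s t)) (hst : s ≤ t)
    {b' : ℝ → ℝ} (hb : ∀ x ∈ Icc s t, HasDerivAt b (b' x) x) (hb'0 : ∀ x ∈ Icc s t, 0 ≤ b' x)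
    (hb'r : ∀ x ∈ Icc s t, b' x ≤ r * b x) (hr : 0 < r) (h5r : ∀ x ∈ Icc s t, 5 * r ≤ b x) :
    lyapunov b y t * exp (r ^ 2 / 2 * ∫ τ in s..t, (b τ)⁻¹) ≤ lyapunov b y s := by
  have hbpos : ∀ x ∈ Icc s t, 0 < b x := fun x hx => by linarith [h5r x hx]
  have hV := fun x (hx : x ∈ Icc s t) => h.deriv_lyapunov_add_le hx
    (hb x hx) (hbpos x hx) (hb'0 x hx) (hb'r x hx) hr.le (h5r x hx)
  have hbinv : ContinuousOn (fun τ => (b τ)⁻¹) (Icc s t) := fun x hx =>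
    ((hb x hx).continuousAt.inv₀ (hbpos x hx).ne').continuousWithinAt
  have hG := continuousOn_integral_of_continuousOn hst hbinv
  have hVcont : ContinuousOn (lyapunov b y) (Icc s t) := fun x hx =>
    (hV x hx).1.continuousAt.continuousWithinAt
  refine (le_of_hasDerivAt_nonpos hst
    (f := fun u => lyapunov b y u * exp (r ^ 2 / 2 * ∫ τ in s..u, (b τ)⁻¹))
    (hVcont.mul (hG.const_mul _).rexp)
    (fun x hx => (hV x (Ioo_subset_Icc_self hx)).1.hasDerivAt.fun_mul
      ((hasDerivAt_integral_of_continuousOn hbinv hx).const_mul (r ^ 2 / 2)).exp)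
    fun x hx => ?_).trans (by simp)
  have := mul_nonpos_of_nonpos_of_nonneg (hV x (Ioo_subset_Icc_self hx)).2
    (exp_pos (r ^ 2 / 2 * ∫ τ in s..x, (b τ)⁻¹)).le
  linarith

variable {b' : ℝ → ℝ} {μ : ℝ}

lemma sq_le_mul_exp_of_late_time (h : SolvesDampedOscillator b r y (Icc s t)) (hst : s ≤ t)
    (hd : AdmissibleDamping b b' μ (Icc s t)) (hr : 0 < r) (h5r : 5 * r ≤ μ) (hrs : 1 ≤ r * s)
    {β : ℝ} (hβ : 0 < β) (hβb : β ≤ b s) (hys : |y s| ≤ 2 / β) (hy's : |deriv y s| ≤ 1) :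
    y t ^ 2 ≤ 22 / β ^ 2 * exp (-(r ^ 2 / 2 * ∫ τ in s..t, (b τ)⁻¹)) := by
  have hdecay := h.lyapunov_mul_exp_le hst hd.hasDerivAt hd.deriv_nonneg
    (fun x hx => hd.deriv_le_mul hx hr.le (hrs.trans (by nlinarith [hx.1])))
    hr fun x hx => h5r.trans (hd.le x hx)
  have hVs := lyapunov_le_of_abs_le hβ hβb hys hy's
  have := mul_le_mul_of_nonneg_right (sq_le_two_mul_lyapunov b y t)
    (exp_pos (r ^ 2 / 2 * ∫ τ in s..t, (b τ)⁻¹)).le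
  rw [exp_neg, ← div_eq_mul_inv, le_div_iff₀ (exp_pos _)]
  have : 22 / β ^ 2 = 2 * (11 / β ^ 2) := by ring
  linarith

lemma abs_le_mul_exp_of_short_time (h : SolvesDampedOscillator b r y (Icc s t)) (hst : s ≤ t)
    (hd : AdmissibleDamping b b' μ (Icc s t)) (hμ : 0 < μ) (hr0 : 0 ≤ r) (hr : 5 * r ≤ μ)
    (hshort : r * (t - s) ≤ 1) (hys : y s = 0) (hy's : deriv y s = 1) :
    |y t| ≤ 8 / b s * exp (-(1 / 4) * r ^ 2 * ∫ τ in s..t, (b τ)⁻¹) := by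
  have hs := left_mem_Icc.2 hst
  have hbs : 0 < b s := hμ.trans_le (hd.le s hs)
  have hyt := h.abs_le_two_div_of_short_time hst hd.continuousOn hbs (fun x => hd.left_le)
    hys hy's (by nlinarith [hd.le s hs, mul_le_mul_of_nonneg_left hshort hr0]) t
    (right_mem_Icc.2 hst)
  have hexp : 1 / 4 ≤ exp (-(1 / 4) * r ^ 2 * ∫ τ in s..t, (b τ)⁻¹) := by
    nlinarith [add_one_le_exp (-(1 / 4) * r ^ 2 * ∫ τ in s..t, (b τ)⁻¹),
      hd.sq_mul_integral_inv_le hμ hst hr0 hr hshort]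
  calc |y t| ≤ 2 / b s := hyt
    _ = 8 / b s * (1 / 4) := by ring
    _ ≤ _ := mul_le_mul_of_nonneg_left hexp (by positivity)

lemma abs_le_mul_exp_of_long_time (h : SolvesDampedOscillator b r y (Icc s t)) (hs : 0 ≤ s)
    (hd : AdmissibleDamping b b' μ (Icc s t)) (hμ : 0 < μ) (hr0 : 0 ≤ r) (hr : 5 * r ≤ μ)
    (hlong : 1 < r * (t - s)) (hys : y s = 0) (hy's : deriv y s = 1) :
    |y t| ≤ 8 / b s * exp (-(1 / 4) * r ^ 2 * ∫ τ in s..t, (b τ)⁻¹) := by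
  have hrpos : 0 < r := lt_of_le_of_ne hr0 (by rintro rfl; linarith)
  set t₁ := s + 1 / r
  have hrt₁ : r * (t₁ - s) = 1 := by
    simp only [t₁, add_sub_cancel_left]
    field_simp
  have ht₁ : t₁ ∈ Icc s t := ⟨by nlinarith, by nlinarith⟩
  have hsub₁ : Icc s t₁ ⊆ Icc s t := Icc_subset_Icc_right ht₁.2
  have hsub₂ : Icc t₁ t ⊆ Icc s t := Icc_subset_Icc_left ht₁.1
  have hbμ : μ ≤ b s := hd.le s (hsub₁ (left_mem_Icc.2 ht₁.1))
  have hbs : 0 < b s := hμ.trans_le hbμ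
  have hy₁ : |y t₁| ≤ 2 / b s := (h.mono hsub₁).abs_le_two_div_of_short_time ht₁.1
    (hd.continuousOn.mono hsub₁) hbs (fun x hx => hd.left_le (hsub₁ hx)) hys hy's
    (by nlinarith) t₁ (right_mem_Icc.2 ht₁.1)
  have hy'₁ : |deriv y t₁| ≤ 1 := by
    have := (h.mono hsub₁).deriv_sq_add_sq_le ht₁.1
      fun x hx => hbs.le.trans (hd.left_le (hsub₁ hx))
    rw [hys, hy's] at this
    exact abs_le_of_sq_le_sq (by nlinarith [sq_nonneg (y t₁)]) zero_le_one
  have hyt := (h.mono hsub₂).sq_le_mul_exp_of_late_time ht₁.2 (hd.mono hsub₂) hrpos hr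
    (by nlinarith) hbs (hd.left_le ht₁) hy₁ hy'₁
  rw [← integral_add_adjacent_intervals
    (((hd.mono hsub₁).continuousOn_inv hμ).intervalIntegrable_of_Icc ht₁.1)
    (((hd.mono hsub₂).continuousOn_inv hμ).intervalIntegrable_of_Icc ht₁.2)]
  exact abs_le_mul_exp_of_sq_le hbs
    ((hd.mono hsub₁).sq_mul_integral_inv_le hμ ht₁.1 hr0 hr hrt₁.le) hyt

theorem abs_le_mul_exp_integral_inv (h : SolvesDampedOscillator b r y (Icc s t)) (hs : 0 ≤ s)
    (hst : s ≤ t) (hd : AdmissibleDamping b b' μ (Icc s t)) (hμ : 0 < μ) (hr0 : 0 ≤ r)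
    (hr : 5 * r ≤ μ) (hys : y s = 0) (hy's : deriv y s = 1) :
    |y t| ≤ 8 / b s * exp (-(1 / 4) * r ^ 2 * ∫ τ in s..t, (b τ)⁻¹) := by
  rcases le_or_gt (r * (t - s)) 1 with hshort | hlong
  · exact h.abs_le_mul_exp_of_short_time hst hd hμ hr0 hr hshort hys hy's
  · exact h.abs_le_mul_exp_of_long_time hs hd hμ hr0 hr hlong hys hy's

end SolvesDampedOscillator

/-- Low-frequency upper bound on the Fourier multiplier `Φ₂ᵛ(t,s,r)` of the
damped wave equation `∂_t²v − Δv + b(t)∂_t v = 0` with `b(τ) = μ(1+τ)^(−λ)`. -/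
theorem Phi2v_low_frequency_upper_bound
    (μ lam : ℝ) (hμ : 0 < μ) (hlam : lam ∈ Set.Ico (-1:ℝ) 0) :
    ∃ c0 > (0:ℝ), ∃ C > (0:ℝ), ∃ K > (0:ℝ), ∃ T0 ≥ (0:ℝ),
      ∀ r : ℝ, 0 ≤ r → r ≤ c0 → ∀ s t : ℝ, T0 ≤ s → s ≤ t →
        ∀ y : ℝ → ℝ,
          (∀ τ : ℝ, DifferentiableAt ℝ y τ) →
          (∀ τ : ℝ, DifferentiableAt ℝ (deriv y) τ) →
          (∀ τ ∈ Set.Icc s t,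
            deriv (deriv y) τ + r^2 * y τ + (μ * (1+τ)^(-lam)) * deriv y τ = 0) →
          y s = 0 → deriv y s = 1 →
          |y t| ≤ (K / (μ * (1+s)^(-lam))) *
            Real.exp (-C * r^2 * ∫ τ in s..t, (μ * (1+τ)^(-lam))⁻¹) := by
  refine ⟨μ / 5, by positivity, 1 / 4, by norm_num, 8, by norm_num, 0, le_rfl, ?_⟩
  intro r hr0 hrc s t hs hst y hy hy' hode hys hy's
  exact SolvesDampedOscillator.abs_le_mul_exp_integral_inv (b := fun τ => μ * (1 + τ) ^ (-lam))
    ⟨hy, hy', hode⟩ hs hst ((admissibleDamping_rpow hμ (Ico_subset_Icc_self hlam)).mono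
      fun x hx => hs.trans hx.1) hμ hr0 (by linarith) hys hy's
end

section
/- Let μ > 0 and λ ∈ [−1,0), and set b(τ) := μ(1+τ)^{−λ}. There exist constants c0 > 0, C > 0, K > 0 and T0 ≥ 0, depending only on μ and λ, with the following property: for every r with 0 ≤ r ≤ c0, every pair of times T0 ≤ s ≤ t, and every twice differentiable function y : ℝ → ℝ satisfying y″(τ) + r²·y(τ) + b(τ)·y′(τ) + b′(τ)·y(τ) = 0 for all τ ∈ [s,t] with initial data y(s) = 0 and y′(s) = 1, one has |y(t)| ≤ (K / b(t))·exp( −C·r²·∫_s^t b(τ)^{−1} dτ ). -/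
/-!
Energy method. With `B = b(τ)` and `B' = b′(τ)`, the function
`H = (y′ + b y)² + r² y² + y′²` satisfies `H′ + (r²/(4B) − 4B′²/B³) H ≤ 0` as soon as
`4B′ ≤ B²` and `4r ≤ B`, which holds for `τ ≥ 4/μ` and `r ≤ μ/4`. Integrating this factor gives
`r²/4 · ∫ b⁻¹` up to a term bounded by `4/μ`, so `H(t) ≤ 2 e^{4/μ} exp(−r²/4 · ∫_s^t b⁻¹)`,
and `(b(t) y(t))² ≤ 2 H(t)`.
-/

open Set Real intervalIntegral

noncomputable def dampedEnergy (r : ℝ) (b y : ℝ → ℝ) (τ : ℝ) : ℝ :=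
  (deriv y τ + b τ * y τ) ^ 2 + r ^ 2 * y τ ^ 2 + deriv y τ ^ 2

lemma dissipation_add_mul_dampedEnergy_nonpos {B B' r Y P : ℝ} (hB : 0 < B)
    (hB' : 4 * B' ≤ B ^ 2) (hr : 0 ≤ r) (hrB : 4 * r ≤ B) :
    -2 * r ^ 2 * B * Y ^ 2 - 2 * B * P ^ 2 - 2 * r ^ 2 * Y * P - 2 * B' * Y * P
      + (r ^ 2 / (4 * B) - 4 * B' ^ 2 / B ^ 3) * ((P + B * Y) ^ 2 + r ^ 2 * Y ^ 2 + P ^ 2)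
      ≤ 0 := by
  have h16 : 16 * r ^ 2 ≤ B ^ 2 := by nlinarith
  have hpoly : (-2 * r ^ 2 * B * Y ^ 2 - 2 * B * P ^ 2 - 2 * r ^ 2 * Y * P - 2 * B' * Y * P)
      * (4 * B ^ 3)
      ≤ (16 * B' ^ 2 - r ^ 2 * B ^ 2) * ((P + B * Y) ^ 2 + r ^ 2 * Y ^ 2 + P ^ 2) := by
    nlinarith [sq_nonneg (B ^ 2 * P + 4 * r ^ 2 * B * Y),
      sq_nonneg (B ^ 2 * P + 4 * B' * (P + B * Y)),
      mul_nonneg (sub_nonneg.2 h16) (mul_nonneg (mul_nonneg (sq_nonneg r) (sq_nonneg B))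
        (sq_nonneg Y)),
      mul_nonneg (sub_nonneg.2 hB') (mul_nonneg (sq_nonneg B) (sq_nonneg P)),
      mul_nonneg (mul_nonneg (sq_nonneg r) (sq_nonneg B)) (sq_nonneg (B * Y - P)),
      mul_nonneg (sub_nonneg.2 h16) (mul_nonneg (sq_nonneg B) (sq_nonneg P)),
      mul_nonneg (sq_nonneg B') (sq_nonneg (r * Y)), mul_nonneg (sq_nonneg B') (sq_nonneg P)]
  have hrate : (r ^ 2 / (4 * B) - 4 * B' ^ 2 / B ^ 3) * ((P + B * Y) ^ 2 + r ^ 2 * Y ^ 2 + P ^ 2)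
      = -((16 * B' ^ 2 - r ^ 2 * B ^ 2) * ((P + B * Y) ^ 2 + r ^ 2 * Y ^ 2 + P ^ 2)
          / (4 * B ^ 3)) := by
    field_simp
    ring
  linarith [(le_div_iff₀ (by positivity : (0 : ℝ) < 4 * B ^ 3)).2 hpoly]

lemma hasDerivAt_dampedEnergy {r τ b'τ : ℝ} {b y : ℝ → ℝ} (hy : DifferentiableAt ℝ y τ)
    (hy' : DifferentiableAt ℝ (deriv y) τ) (hb : HasDerivAt b b'τ τ)
    (hode : deriv (deriv y) τ + r ^ 2 * y τ + b τ * deriv y τ + b'τ * y τ = 0) :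
    HasDerivAt (dampedEnergy r b y)
      (-2 * r ^ 2 * b τ * y τ ^ 2 - 2 * b τ * deriv y τ ^ 2 - 2 * r ^ 2 * y τ * deriv y τ
        - 2 * b'τ * y τ * deriv y τ) τ := by
  have hfull := (((hy'.hasDerivAt.add (hb.mul hy.hasDerivAt)).pow 2).add
    ((hy.hasDerivAt.pow 2).const_mul (r ^ 2))).add (hy'.hasDerivAt.pow 2)
  refine hfull.congr_deriv ?_
  rw [show deriv (deriv y) τ = -(r ^ 2 * y τ + b τ * deriv y τ + b'τ * y τ) by linarith]
  simp only [Pi.add_apply, Pi.mul_apply]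
  ring

lemma sq_mul_le_two_mul_dampedEnergy (r : ℝ) (b y : ℝ → ℝ) (τ : ℝ) :
    (b τ * y τ) ^ 2 ≤ 2 * dampedEnergy r b y τ := by
  unfold dampedEnergy
  nlinarith [sq_nonneg (deriv y τ + b τ * y τ + deriv y τ),
    mul_nonneg (sq_nonneg r) (sq_nonneg (y τ))]

lemma mul_exp_le_of_deriv_add_mul_nonpos {H H' E g : ℝ → ℝ} {s t : ℝ} (hst : s ≤ t)
    (hH : ∀ τ ∈ Icc s t, HasDerivAt H (H' τ) τ) (hE : ∀ τ ∈ Icc s t, HasDerivAt E (g τ) τ)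
    (hneg : ∀ τ ∈ Icc s t, H' τ + g τ * H τ ≤ 0) :
    H t * exp (E t) ≤ H s * exp (E s) := by
  have hderiv : ∀ τ ∈ Icc s t,
      HasDerivAt (fun τ => H τ * exp (E τ)) (exp (E τ) * (H' τ + g τ * H τ)) τ := fun τ hτ =>
    ((hH τ hτ).mul (hE τ hτ).exp).congr_deriv (by ring)
  refine antitoneOn_of_hasDerivWithinAt_nonpos (convex_Icc s t)
    (fun τ hτ => (hderiv τ hτ).continuousAt.continuousWithinAt)
    (fun τ hτ => (hderiv τ (interior_subset hτ)).hasDerivWithinAt)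
    (fun τ hτ => mul_nonpos_of_nonneg_of_nonpos (exp_pos _).le (hneg τ (interior_subset hτ)))
    (left_mem_Icc.2 hst) (right_mem_Icc.2 hst) hst

theorem dampedEnergy_mul_exp_le {r s t : ℝ} {b b' y E : ℝ → ℝ} (hst : s ≤ t) (hr : 0 ≤ r)
    (hy : ∀ τ ∈ Icc s t, DifferentiableAt ℝ y τ)
    (hy' : ∀ τ ∈ Icc s t, DifferentiableAt ℝ (deriv y) τ)
    (hb : ∀ τ ∈ Icc s t, HasDerivAt b (b' τ) τ)
    (hode : ∀ τ ∈ Icc s t, deriv (deriv y) τ + r ^ 2 * y τ + b τ * deriv y τ + b' τ * y τ = 0)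
    (hbpos : ∀ τ ∈ Icc s t, 0 < b τ) (hb' : ∀ τ ∈ Icc s t, 4 * b' τ ≤ b τ ^ 2)
    (hrb : ∀ τ ∈ Icc s t, 4 * r ≤ b τ)
    (hE : ∀ τ ∈ Icc s t, HasDerivAt E (r ^ 2 / (4 * b τ) - 4 * b' τ ^ 2 / b τ ^ 3) τ) :
    dampedEnergy r b y t * exp (E t) ≤ dampedEnergy r b y s * exp (E s) :=
  mul_exp_le_of_deriv_add_mul_nonpos hst
    (fun τ hτ => hasDerivAt_dampedEnergy (hy τ hτ) (hy' τ hτ) (hb τ hτ) (hode τ hτ)) hE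
    (fun τ hτ => dissipation_add_mul_dampedEnergy_nonpos (hbpos τ hτ) (hb' τ hτ) hr (hrb τ hτ))

section PowerDamping

variable {μ lam : ℝ}

lemma hasDerivAt_powerDamping {τ : ℝ} (hτ : 0 < 1 + τ) :
    HasDerivAt (fun x => μ * (1 + x) ^ (-lam)) (-lam * μ * (1 + τ) ^ (-lam - 1)) τ := by
  have h := ((Real.hasDerivAt_rpow_const (p := -lam) (Or.inl hτ.ne')).comp τ
    ((hasDerivAt_id τ).const_add 1)).const_mul μ
  exact h.congr_deriv (by simp only [mul_one]; ring)

lemma le_powerDamping (hμ : 0 ≤ μ) (hlam : lam ≤ 0) {τ : ℝ} (hτ : 0 ≤ τ) :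
    μ ≤ μ * (1 + τ) ^ (-lam) :=
  le_mul_of_one_le_right hμ (one_le_rpow (by linarith) (by linarith))

lemma four_mul_deriv_powerDamping_le_sq (hμ : 0 < μ) (hlam₁ : -1 ≤ lam) (hlam₀ : lam ≤ 0)
    {τ : ℝ} (hτ : 4 / μ ≤ τ) :
    4 * (-lam * μ * (1 + τ) ^ (-lam - 1)) ≤ (μ * (1 + τ) ^ (-lam)) ^ 2 := by
  have hτ₀ : 0 ≤ τ := le_trans (div_pos four_pos hμ).le hτ
  have hx : 0 < 1 + τ := by linarith
  have hμx : 4 ≤ μ * (1 + τ) := by rw [div_le_iff₀ hμ] at hτ; nlinarith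
  have hpow : (1 + τ) ^ (-lam - 1) * (1 + τ) = (1 + τ) ^ (-lam) := by
    rw [← rpow_add_one hx.ne']; ring_nf
  have hone : 1 ≤ (1 + τ) ^ (-lam) := one_le_rpow (by linarith) (by linarith)
  have hpos : 0 < (1 + τ) ^ (-lam - 1) := rpow_pos_of_pos hx _
  calc 4 * (-lam * μ * (1 + τ) ^ (-lam - 1))
      ≤ 4 * (μ * (1 + τ) ^ (-lam - 1)) := by nlinarith [mul_pos hμ hpos]
    _ ≤ μ * (μ * (1 + τ)) * (1 + τ) ^ (-lam - 1) := by nlinarith [mul_pos hμ hpos]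
    _ = μ ^ 2 * (1 + τ) ^ (-lam) := by rw [← hpow]; ring
    _ ≤ (μ * (1 + τ) ^ (-lam)) ^ 2 := by nlinarith [sq_nonneg μ]

lemma rate_powerDamping (hμ : μ ≠ 0) (r : ℝ) {τ : ℝ} (hτ : 0 < 1 + τ) :
    r ^ 2 / (4 * (μ * (1 + τ) ^ (-lam))) - 4 * (-lam * μ * (1 + τ) ^ (-lam - 1)) ^ 2
        / (μ * (1 + τ) ^ (-lam)) ^ 3
      = r ^ 2 / 4 * (μ * (1 + τ) ^ (-lam))⁻¹ - 4 * lam ^ 2 / μ * (1 + τ) ^ (lam - 2) := by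
  have hsq : ((1 + τ) ^ (-lam - 1)) ^ 2 = (1 + τ) ^ (lam - 2) * ((1 + τ) ^ (-lam)) ^ 3 := by
    simp only [← rpow_natCast, ← rpow_mul hτ.le, ← rpow_add hτ]
    ring_nf
  have hne : (1 + τ) ^ (-lam) ≠ 0 := (rpow_pos_of_pos hτ _).ne'
  rw [mul_pow _ ((1 + τ) ^ (-lam - 1)), hsq]
  field_simp

lemma hasDerivAt_integral_inv_powerDamping (hμ : μ ≠ 0) {s τ : ℝ} (hs : -1 < s) (hτ : -1 < τ) :
    HasDerivAt (fun u => ∫ σ in s..u, (μ * (1 + σ) ^ (-lam))⁻¹) (μ * (1 + τ) ^ (-lam))⁻¹ τ := by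
  have hcont : ContinuousOn (fun σ : ℝ => (μ * (1 + σ) ^ (-lam))⁻¹) (Ioi (-1)) := by
    refine (continuousOn_const.mul (ContinuousOn.rpow_const (by fun_prop) fun σ hσ => ?_)).inv₀
      fun σ hσ => mul_ne_zero hμ (rpow_pos_of_pos (by linarith [mem_Ioi.1 hσ]) _).ne'
    exact Or.inl (by linarith [mem_Ioi.1 hσ])
  refine integral_hasDerivAt_right ((hcont.mono fun σ hσ => ?_).intervalIntegrable)
    (hcont.stronglyMeasurableAtFilter isOpen_Ioi τ hτ) (hcont.continuousAt (Ioi_mem_nhds hτ))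
  exact mem_Ioi.2 (lt_of_lt_of_le (lt_min hs hτ) hσ.1)

/- The rate of `dampedEnergy_mul_exp_le` integrates to `r²/4 · ∫ b⁻¹ + c (1+τ)^(λ-1)` with
`0 ≤ c = 4λ²/(μ(1-λ)) ≤ 4/μ`, and `(1+s)^(λ-1) ≤ 1`. -/
theorem dampedEnergy_powerDamping_le (hμ : 0 < μ) (hlam₁ : -1 ≤ lam) (hlam₀ : lam ≤ 0)
    {r s t : ℝ} {y : ℝ → ℝ} (hr : 0 ≤ r) (hrμ : 4 * r ≤ μ) (hs : 4 / μ ≤ s) (hst : s ≤ t)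
    (hy : ∀ τ ∈ Icc s t, DifferentiableAt ℝ y τ)
    (hy' : ∀ τ ∈ Icc s t, DifferentiableAt ℝ (deriv y) τ)
    (hode : ∀ τ ∈ Icc s t, deriv (deriv y) τ + r ^ 2 * y τ + μ * (1 + τ) ^ (-lam) * deriv y τ
      + -lam * μ * (1 + τ) ^ (-lam - 1) * y τ = 0) :
    dampedEnergy r (fun τ => μ * (1 + τ) ^ (-lam)) y t ≤
      dampedEnergy r (fun τ => μ * (1 + τ) ^ (-lam)) y s *
        exp (4 / μ - r ^ 2 / 4 * ∫ τ in s..t, (μ * (1 + τ) ^ (-lam))⁻¹) := by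
  have hs₀ : 0 ≤ s := le_trans (div_pos four_pos hμ).le hs
  have hτ₀ : ∀ τ ∈ Icc s t, 0 < 1 + τ := fun τ hτ => by linarith [hτ.1]
  set c := 4 * lam ^ 2 / (μ * (1 - lam))
  set E := fun τ => r ^ 2 / 4 * (∫ σ in s..τ, (μ * (1 + σ) ^ (-lam))⁻¹) + c * (1 + τ) ^ (lam - 1)
  have hE : ∀ τ ∈ Icc s t, HasDerivAt E (r ^ 2 / (4 * (μ * (1 + τ) ^ (-lam)))
      - 4 * (-lam * μ * (1 + τ) ^ (-lam - 1)) ^ 2 / (μ * (1 + τ) ^ (-lam)) ^ 3) τ := by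
    intro τ hτ
    rw [rate_powerDamping hμ.ne' r (hτ₀ τ hτ)]
    have hpow := (Real.hasDerivAt_rpow_const (p := lam - 1) (Or.inl (hτ₀ τ hτ).ne')).comp τ
      ((hasDerivAt_id τ).const_add 1)
    refine (((hasDerivAt_integral_inv_powerDamping hμ.ne' (by linarith)
      (by linarith [hτ₀ τ hτ])).const_mul _).add (hpow.const_mul c)).congr_deriv ?_
    have : 1 - lam ≠ 0 := by linarith
    simp only [c, mul_one, sub_sub, show (1 : ℝ) + 1 = 2 by norm_num]
    field_simp
    ring
  have hdecay := dampedEnergy_mul_exp_le (E := E) hst hr hy hy'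
    (fun τ hτ => hasDerivAt_powerDamping (hτ₀ τ hτ)) hode
    (fun τ hτ => mul_pos hμ (rpow_pos_of_pos (hτ₀ τ hτ) _))
    (fun τ hτ => four_mul_deriv_powerDamping_le_sq hμ hlam₁ hlam₀ (hs.trans hτ.1))
    (fun τ hτ => hrμ.trans (le_powerDamping hμ.le hlam₀ (hs₀.trans hτ.1))) hE
  have hc₀ : 0 ≤ c := div_nonneg (by positivity) (mul_nonneg hμ.le (by linarith))
  have hc : c ≤ 4 / μ := by
    have hlam : lam ^ 2 ≤ 1 - lam := by nlinarith
    rw [div_le_div_iff₀ (mul_pos hμ (by linarith)) hμ]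
    nlinarith [mul_le_mul_of_nonneg_left hlam hμ.le]
  have hEs : E s ≤ 4 / μ := by
    have : (1 + s) ^ (lam - 1) ≤ 1 := rpow_le_one_of_one_le_of_nonpos (by linarith) (by linarith)
    simp only [E, integral_same, mul_zero, zero_add]
    nlinarith
  have hEt : r ^ 2 / 4 * (∫ σ in s..t, (μ * (1 + σ) ^ (-lam))⁻¹) ≤ E t :=
    le_add_of_nonneg_right (mul_nonneg hc₀ (rpow_pos_of_pos (by linarith) _).le)
  calc dampedEnergy r (fun τ => μ * (1 + τ) ^ (-lam)) y t
      ≤ dampedEnergy r (fun τ => μ * (1 + τ) ^ (-lam)) y s * exp (E s - E t) := by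
        rw [exp_sub, mul_div_assoc', le_div_iff₀ (exp_pos _)]
        exact hdecay
    _ ≤ _ := by
        gcongr
        · unfold dampedEnergy; positivity

end PowerDamping

/-- Low-frequency upper bound on the Fourier multiplier `Φ₂ᵘ(t,s,r)` of the
damped wave equation `∂_t²u − Δu + ∂_t(b(t)u) = 0` with `b(τ) = μ(1+τ)^(−λ)`,
so that `b′(τ) = −λμ(1+τ)^(−λ−1)`. -/
theorem Phi2u_low_frequency_upper_bound
    (μ lam : ℝ) (hμ : 0 < μ) (hlam : lam ∈ Set.Ico (-1:ℝ) 0) :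
    ∃ c0 > (0:ℝ), ∃ C > (0:ℝ), ∃ K > (0:ℝ), ∃ T0 ≥ (0:ℝ),
      ∀ r : ℝ, 0 ≤ r → r ≤ c0 → ∀ s t : ℝ, T0 ≤ s → s ≤ t →
        ∀ y : ℝ → ℝ,
          (∀ τ : ℝ, DifferentiableAt ℝ y τ) →
          (∀ τ : ℝ, DifferentiableAt ℝ (deriv y) τ) →
          (∀ τ ∈ Set.Icc s t,
            deriv (deriv y) τ + r^2 * y τ + (μ * (1+τ)^(-lam)) * deriv y τ
              + (-lam * μ * (1+τ)^(-lam-1)) * y τ = 0) →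
          y s = 0 → deriv y s = 1 →
          |y t| ≤ (K / (μ * (1+t)^(-lam))) *
            Real.exp (-C * r^2 * ∫ τ in s..t, (μ * (1+τ)^(-lam))⁻¹) := by
  obtain ⟨hlam₁, hlam₀⟩ := hlam
  refine ⟨μ / 4, by positivity, 1 / 8, by norm_num, 2 * exp (2 / μ), by positivity, 4 / μ,
    by positivity, fun r hr hrc s t hs hst y hy hy' hode hys hy's => ?_⟩
  have hbt : 0 < μ * (1 + t) ^ (-lam) :=
    mul_pos hμ (rpow_pos_of_pos (by linarith [div_pos four_pos hμ]) _)
  have hHs : dampedEnergy r (fun τ => μ * (1 + τ) ^ (-lam)) y s = 2 := by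
    norm_num [dampedEnergy, hys, hy's]
  have hdecay := hHs ▸ dampedEnergy_powerDamping_le hμ hlam₁ hlam₀.le hr (by linarith) hs hst
    (fun τ _ => hy τ) (fun τ _ => hy' τ) hode
  set I := ∫ τ in s..t, (μ * (1 + τ) ^ (-lam))⁻¹
  have hsq :
      (μ * (1 + t) ^ (-lam) * y t) ^ 2 ≤ (2 * exp (2 / μ) * exp (-(1 / 8) * r ^ 2 * I)) ^ 2 :=
    calc (μ * (1 + t) ^ (-lam) * y t) ^ 2
        ≤ 2 * dampedEnergy r (fun τ => μ * (1 + τ) ^ (-lam)) y t :=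
          sq_mul_le_two_mul_dampedEnergy r (fun τ => μ * (1 + τ) ^ (-lam)) y t
      _ ≤ 2 * (2 * exp (4 / μ - r ^ 2 / 4 * I)) := mul_le_mul_of_nonneg_left hdecay two_pos.le
      _ = (2 * exp (2 / μ) * exp (-(1 / 8) * r ^ 2 * I)) ^ 2 := by
          rw [mul_pow, mul_pow, ← exp_nat_mul, ← exp_nat_mul, mul_assoc, ← exp_add]
          ring_nf
  rw [div_mul_eq_mul_div, le_div_iff₀ hbt, mul_comm, ← abs_of_pos hbt, ← abs_mul]
  exact abs_le_of_sq_le_sq hsq (by positivity)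
end

section
/- Let μ > 0 and λ ∈ [−1,0), and set b(t) := μ(1+t)^{−λ}, so b′(t) = −λμ(1+t)^{−λ−1} ≥ 0. For a fixed r ≥ 0 define m_v(t) := r² − b(t)²/4 − b′(t)/2 and, where m_v(t) < 0, h(t) := √( b(t)²/4 + b′(t)/2 − r² ) = √(|m_v(t)|). Then for every ε ∈ (0,1/2) there exist constants C1 > 0, C2 > 0, C > 0 and T ≥ 0, depending only on μ, λ and ε, such that for all t ≥ T and all r ≥ 0 with h(t) ≥ ε·b(t) (the elliptic-zone condition), the two-sided estimate holds: −C2·r²/b(t) + b′(t)/b(t) − C·(1+t)^{λ−2} ≤ h(t) + h′(t)/(2h(t)) − b(t)/2 ≤ −C1·r²/b(t) + b′(t)/b(t) + C·(1+t)^{λ−2}, where h′(t) denotes the derivative of h at t (with r held fixed). -/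
/-!
Write `B, B', B''` for `b, b', b''` at time `t` and `H = h(t)`, so that `H² = B²/4 + B'/2 - r²`
and `H' = (B B' + B'')/(4H)`. Rationalising `H - B/2` and `B - 2H` against
`H² - B²/4 = B'/2 - r²` gives the exact identity
`H + H'/(2H) - B/2 = B'/B - r² (2/(B+2H) - 4B'K) - 2B'²K + B''/(8H²)`
with `K = ellipticWeight B H`, and in the elliptic zone `0 ≤ K ≤ 1/(4ε²B³)`.
Since `B'/B² ≍ (1+t)^(λ-1) → 0`, for large `t` the correction `4B'K` is absorbed by
`2/(B+2H) ≍ 1/B`, while `B'²/B³` and `B''/B²` are constant multiples of `(1+t)^(λ-2)`.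
-/

noncomputable def ellipticWeight (B H : ℝ) : ℝ :=
  (B ^ 2 + 4 * H * B + 8 * H ^ 2) / (8 * H ^ 2 * B * (B + 2 * H) ^ 2)

section EllipticAlgebra

variable {ε B B' B'' H H' r : ℝ}

theorem ellipticWeight_nonneg (hB : 0 < B) (hH : 0 < H) : 0 ≤ ellipticWeight B H := by
  unfold ellipticWeight; positivity

theorem ellipticWeight_le (hε : 0 < ε) (hB : 0 < B) (hzone : ε * B ≤ H) :
    ellipticWeight B H ≤ 1 / (4 * ε ^ 2 * B ^ 3) := by
  have hH : 0 < H := (mul_pos hε hB).trans_le hzone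
  calc ellipticWeight B H ≤ 1 / (4 * H ^ 2 * B) := by
        unfold ellipticWeight
        rw [div_le_div_iff₀ (by positivity) (by positivity)]
        nlinarith [mul_pos hH hB, sq_nonneg H, mul_pos (mul_pos hH hH) hB]
    _ ≤ 1 / (4 * ε ^ 2 * B ^ 3) := by
        apply one_div_le_one_div_of_le (by positivity)
        nlinarith [mul_le_mul hzone hzone (by positivity) hH.le]

theorem elliptic_phase_eq (hB : 0 < B) (hH : 0 < H) (hH2 : H ^ 2 = B ^ 2 / 4 + B' / 2 - r ^ 2)
    (hH' : H' = (B * B' + B'') / (4 * H)) :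
    H + H' / (2 * H) - B / 2 = B' / B - r ^ 2 * (2 / (B + 2 * H) - 4 * B' * ellipticWeight B H)
      - 2 * B' ^ 2 * ellipticWeight B H + B'' / (8 * H ^ 2) := by
  have hr : r ^ 2 = B ^ 2 / 4 + B' / 2 - H ^ 2 := by linarith
  rw [hH', hr, ellipticWeight]
  field_simp
  ring

theorem elliptic_phase_le (hε : 0 < ε) (hε1 : ε ≤ 1) (hB : 0 < B) (hB' : 0 ≤ B')
    (hB'' : B'' ≤ 0) (hH2 : H ^ 2 = B ^ 2 / 4 + B' / 2 - r ^ 2)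
    (hH' : H' = (B * B' + B'') / (4 * H))
    (hzone : ε * B ≤ H) (hsmall : 3 / ε ^ 2 * B' ≤ B ^ 2) :
    H + H' / (2 * H) - B / 2 ≤ -(1 / 3) * r ^ 2 / B + B' / B := by
  have hH : 0 < H := (mul_pos hε hB).trans_le hzone
  have hK := ellipticWeight_le hε hB hzone
  have hHB : H ≤ B := by
    have h3 : (3 : ℝ) ≤ 3 / ε ^ 2 := by rw [le_div_iff₀ (by positivity)]; nlinarith
    nlinarith [mul_le_mul_of_nonneg_right h3 hB']
  have hweight : 4 * B' * ellipticWeight B H ≤ 1 / (3 * B) :=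
    calc 4 * B' * ellipticWeight B H ≤ 4 * B' * (1 / (4 * ε ^ 2 * B ^ 3)) := by gcongr
      _ = 3 / ε ^ 2 * B' / (3 * B ^ 3) := by field_simp
      _ ≤ B ^ 2 / (3 * B ^ 3) := by gcongr
      _ = 1 / (3 * B) := by field_simp
  have hbracket : 1 / (3 * B) ≤ 2 / (B + 2 * H) - 4 * B' * ellipticWeight B H := by
    have : 2 / (3 * B) ≤ 2 / (B + 2 * H) := by gcongr; linarith
    have : 2 / (3 * B) = 1 / (3 * B) + 1 / (3 * B) := by ring
    linarith
  have hquad : 0 ≤ 2 * B' ^ 2 * ellipticWeight B H := by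
    have := ellipticWeight_nonneg hB hH; positivity
  have hB''H : B'' / (8 * H ^ 2) ≤ 0 := div_nonpos_of_nonpos_of_nonneg hB'' (by positivity)
  rw [elliptic_phase_eq hB hH hH2 hH']
  calc _ ≤ B' / B - r ^ 2 * (1 / (3 * B)) := by
        nlinarith [mul_le_mul_of_nonneg_left hbracket (sq_nonneg r)]
    _ = _ := by ring

theorem le_elliptic_phase (hε : 0 < ε) (hB : 0 < B) (hB' : 0 ≤ B') (hB'' : B'' ≤ 0)
    (hH2 : H ^ 2 = B ^ 2 / 4 + B' / 2 - r ^ 2) (hH' : H' = (B * B' + B'') / (4 * H))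
    (hzone : ε * B ≤ H) :
    -2 * r ^ 2 / B + B' / B - 1 / (2 * ε ^ 2) * (B' ^ 2 / B ^ 3) + 1 / (8 * ε ^ 2) * (B'' / B ^ 2)
      ≤ H + H' / (2 * H) - B / 2 := by
  have hH : 0 < H := (mul_pos hε hB).trans_le hzone
  have hK := ellipticWeight_le hε hB hzone
  have hK0 := ellipticWeight_nonneg hB hH
  have hradial : r ^ 2 * (2 / (B + 2 * H) - 4 * B' * ellipticWeight B H) ≤ 2 * r ^ 2 / B := by
    have : 2 / (B + 2 * H) ≤ 2 / B := by gcongr; linarith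
    have : 0 ≤ 4 * B' * ellipticWeight B H := by positivity
    calc _ ≤ r ^ 2 * (2 / B) := by gcongr; linarith
      _ = _ := by ring
  have hquad : 2 * B' ^ 2 * ellipticWeight B H ≤ 1 / (2 * ε ^ 2) * (B' ^ 2 / B ^ 3) :=
    calc _ ≤ 2 * B' ^ 2 * (1 / (4 * ε ^ 2 * B ^ 3)) := by gcongr
      _ = _ := by field_simp; ring
  have hsecond : 1 / (8 * ε ^ 2) * (B'' / B ^ 2) ≤ B'' / (8 * H ^ 2) :=
    calc 1 / (8 * ε ^ 2) * (B'' / B ^ 2) = B'' / (8 * (ε * B) ^ 2) := by ring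
      _ ≤ B'' / (8 * H ^ 2) := by
        rw [div_le_div_iff₀ (by positivity) (by positivity)]
        nlinarith [mul_le_mul_of_nonpos_left (pow_le_pow_left₀ (by positivity) hzone 2) hB'']
  rw [elliptic_phase_eq hB hH hH2 hH', neg_mul, neg_div]
  linarith

end EllipticAlgebra

theorem hasDerivAt_sqrt_symbol {b b₁ : ℝ → ℝ} {b' b₁' r t : ℝ} (hb : HasDerivAt b b' t)
    (hb₁ : HasDerivAt b₁ b₁' t) (hF : b t ^ 2 / 4 + b₁ t / 2 - r ^ 2 ≠ 0) :
    HasDerivAt (fun τ => √(b τ ^ 2 / 4 + b₁ τ / 2 - r ^ 2))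
      ((b t * b' + b₁') / (4 * √(b t ^ 2 / 4 + b₁ t / 2 - r ^ 2))) t := by
  have hF' :
      HasDerivAt (fun τ => b τ ^ 2 / 4 + b₁ τ / 2 - r ^ 2) ((b t * b' + b₁') / 2) t := by
    refine ((((hb.fun_pow 2).div_const 4).add (hb₁.div_const 2)).sub_const (r ^ 2)).congr_deriv ?_
    push_cast
    ring
  convert hF'.sqrt hF using 1
  ring

section Damping

variable {μ lam t : ℝ}

theorem hasDerivAt_const_mul_one_add_rpow (c p : ℝ) (ht : 0 < 1 + t) :
    HasDerivAt (fun τ => c * (1 + τ) ^ p) (c * p * (1 + t) ^ (p - 1)) t := by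
  simpa [mul_assoc] using
    (((hasDerivAt_id t).const_add 1).rpow_const (p := p) (Or.inl ht.ne')).const_mul c

theorem hasDerivAt_damping (ht : 0 < 1 + t) :
    HasDerivAt (fun τ => μ * (1 + τ) ^ (-lam)) (-lam * μ * (1 + t) ^ (-lam - 1)) t := by
  convert hasDerivAt_const_mul_one_add_rpow μ (-lam) ht using 1
  ring

theorem hasDerivAt_damping_deriv (ht : 0 < 1 + t) :
    HasDerivAt (fun τ => -lam * μ * (1 + τ) ^ (-lam - 1))
      (lam * (lam + 1) * μ * (1 + t) ^ (-lam - 2)) t := by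
  convert hasDerivAt_const_mul_one_add_rpow (-lam * μ) (-lam - 1) ht using 1
  ring_nf

theorem damping_sq_ratio (hμ : 0 < μ) (ht : 0 < 1 + t) :
    (-lam * μ * (1 + t) ^ (-lam - 1)) ^ 2 / (μ * (1 + t) ^ (-lam)) ^ 3
      = lam ^ 2 / μ * (1 + t) ^ (lam - 2) := by
  have hs : 0 < (1 + t) ^ lam := Real.rpow_pos_of_pos ht lam
  have h2 : (1 + t) ^ (lam - 2) = (1 + t) ^ lam / (1 + t) ^ 2 := by
    exact_mod_cast Real.rpow_sub_natCast ht.ne' lam 2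
  rw [Real.rpow_sub_one ht.ne', h2, Real.rpow_neg ht.le]
  field_simp

theorem damping_deriv_ratio (hμ : 0 < μ) (ht : 0 < 1 + t) :
    lam * (lam + 1) * μ * (1 + t) ^ (-lam - 2) / (μ * (1 + t) ^ (-lam)) ^ 2
      = lam * (lam + 1) / μ * (1 + t) ^ (lam - 2) := by
  have hs : 0 < (1 + t) ^ lam := Real.rpow_pos_of_pos ht lam
  have h2 : ∀ p : ℝ, (1 + t) ^ (p - 2) = (1 + t) ^ p / (1 + t) ^ 2 := fun p => by
    exact_mod_cast Real.rpow_sub_natCast ht.ne' p 2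
  rw [h2, h2, Real.rpow_neg ht.le]
  field_simp

theorem damping_deriv_le (hμ : 0 < μ) (hlam : lam ∈ Set.Ico (-1 : ℝ) 0) (ht : 0 ≤ t)
    {c : ℝ} (hc : c ≤ μ * (1 + t)) :
    c * (-lam * μ * (1 + t) ^ (-lam - 1)) ≤ (μ * (1 + t) ^ (-lam)) ^ 2 := by
  have ht1 : 0 < 1 + t := by linarith
  have hs : 1 ≤ (1 + t) ^ (-lam) := Real.one_le_rpow (by linarith) (by linarith [hlam.2])
  have hclam : c * -lam ≤ μ * (1 + t) := by
    nlinarith [mul_le_mul_of_nonneg_right hc (neg_nonneg.2 hlam.2.le),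
      mul_nonneg (mul_pos hμ ht1).le (by linarith [hlam.1] : (0 : ℝ) ≤ 1 + lam)]
  rw [Real.rpow_sub_one ht1.ne']
  calc c * (-lam * μ * ((1 + t) ^ (-lam) / (1 + t)))
      = c * -lam * (μ * (1 + t) ^ (-lam)) / (1 + t) := by ring
    _ ≤ μ * (1 + t) * (μ * (1 + t) ^ (-lam)) / (1 + t) := by gcongr
    _ = μ ^ 2 * (1 + t) ^ (-lam) := by field_simp
    _ ≤ (μ * (1 + t) ^ (-lam)) ^ 2 := by nlinarith [sq_nonneg μ]

theorem elliptic_phase_bounds_of_damping {ε r H H' : ℝ} (hμ : 0 < μ)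
    (hlam : lam ∈ Set.Ico (-1 : ℝ) 0) (hε : 0 < ε) (hε1 : ε ≤ 1)
    (hT : 3 / (ε ^ 2 * μ) ≤ t)
    (hH2 : H ^ 2 = (μ * (1 + t) ^ (-lam)) ^ 2 / 4 + -lam * μ * (1 + t) ^ (-lam - 1) / 2 - r ^ 2)
    (hH' : H' = (μ * (1 + t) ^ (-lam) * (-lam * μ * (1 + t) ^ (-lam - 1))
      + lam * (lam + 1) * μ * (1 + t) ^ (-lam - 2)) / (4 * H))
    (hzone : ε * (μ * (1 + t) ^ (-lam)) ≤ H) :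
    (-2 * r ^ 2 / (μ * (1 + t) ^ (-lam))
        + -lam * μ * (1 + t) ^ (-lam - 1) / (μ * (1 + t) ^ (-lam))
        - 1 / (ε ^ 2 * μ) * (1 + t) ^ (lam - 2)
      ≤ H + H' / (2 * H) - μ * (1 + t) ^ (-lam) / 2) ∧
    (H + H' / (2 * H) - μ * (1 + t) ^ (-lam) / 2
      ≤ -(1 / 3) * r ^ 2 / (μ * (1 + t) ^ (-lam))
        + -lam * μ * (1 + t) ^ (-lam - 1) / (μ * (1 + t) ^ (-lam))
        + 1 / (ε ^ 2 * μ) * (1 + t) ^ (lam - 2)) := by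
  obtain ⟨hlam1, hlam0⟩ := hlam
  have ht : 0 ≤ t := (by positivity : (0 : ℝ) ≤ 3 / (ε ^ 2 * μ)).trans hT
  have ht1 : 0 < 1 + t := by linarith
  have hB : 0 < μ * (1 + t) ^ (-lam) := by positivity
  have hB' : 0 ≤ -lam * μ * (1 + t) ^ (-lam - 1) :=
    mul_nonneg (mul_nonneg (by linarith) hμ.le) (by positivity)
  have hB'' : lam * (lam + 1) * μ * (1 + t) ^ (-lam - 2) ≤ 0 :=
    mul_nonpos_of_nonpos_of_nonneg (mul_nonpos_of_nonpos_of_nonneg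
      (mul_nonpos_of_nonpos_of_nonneg hlam0.le (by linarith)) hμ.le) (by positivity)
  have hsmall :
      3 / ε ^ 2 * (-lam * μ * (1 + t) ^ (-lam - 1)) ≤ (μ * (1 + t) ^ (-lam)) ^ 2 := by
    refine damping_deriv_le hμ ⟨hlam1, hlam0⟩ ht ?_
    calc 3 / ε ^ 2 = μ * (3 / (ε ^ 2 * μ)) := by field_simp
      _ ≤ μ * (1 + t) := by gcongr; linarith
  have herror :
      1 / (2 * ε ^ 2) * ((-lam * μ * (1 + t) ^ (-lam - 1)) ^ 2 / (μ * (1 + t) ^ (-lam)) ^ 3)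
        - 1 / (8 * ε ^ 2)
          * (lam * (lam + 1) * μ * (1 + t) ^ (-lam - 2) / (μ * (1 + t) ^ (-lam)) ^ 2)
      ≤ 1 / (ε ^ 2 * μ) * (1 + t) ^ (lam - 2) := by
    have hcoef : (3 * lam ^ 2 - lam) / 8 ≤ 1 := by nlinarith
    rw [damping_sq_ratio hμ ht1, damping_deriv_ratio hμ ht1]
    calc _ = (3 * lam ^ 2 - lam) / 8 * (1 / (ε ^ 2 * μ) * (1 + t) ^ (lam - 2)) := by
          field_simp; ring
      _ ≤ 1 / (ε ^ 2 * μ) * (1 + t) ^ (lam - 2) := mul_le_of_le_one_left (by positivity) hcoef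
  have hC : 0 ≤ 1 / (ε ^ 2 * μ) * (1 + t) ^ (lam - 2) := by positivity
  have lower := le_elliptic_phase hε hB hB' hB'' hH2 hH' hzone
  have upper := elliptic_phase_le hε hε1 hB hB' hB'' hH2 hH' hzone hsmall
  constructor <;> linarith

end Damping

/-- Elliptic-zone asymptotic estimate for the `v`-equation: with
`b(t) = μ(1+t)^(−λ)`, `b′(t) = −λμ(1+t)^(−λ−1)` and
`h(t) = √(b(t)²/4 + b′(t)/2 − r²)`, the quantity `h + h′/(2h) − b/2` is
comparable to `−r²/b(t) + b′(t)/b(t)` up to an error `O((1+t)^(λ−2))`. -/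
theorem elliptic_zone_estimate_v
    (μ lam ε : ℝ) (hμ : 0 < μ) (hlam : lam ∈ Set.Ico (-1:ℝ) 0)
    (hε : ε ∈ Set.Ioo (0:ℝ) (1/2:ℝ)) :
    ∃ C1 > (0:ℝ), ∃ C2 > (0:ℝ), ∃ C > (0:ℝ), ∃ T ≥ (0:ℝ),
      ∀ t : ℝ, T ≤ t → ∀ r : ℝ, 0 ≤ r →
        ∀ h : ℝ → ℝ,
          (h = fun τ =>
            Real.sqrt ((μ * (1+τ)^(-lam))^2/4 + (-lam * μ * (1+τ)^(-lam-1))/2 - r^2)) →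
          ε * (μ * (1+t)^(-lam)) ≤ h t →
          (-C2 * r^2 / (μ * (1+t)^(-lam))
              + (-lam * μ * (1+t)^(-lam-1)) / (μ * (1+t)^(-lam))
              - C * (1+t)^(lam-2)
            ≤ h t + deriv h t / (2 * h t) - (μ * (1+t)^(-lam)) / 2) ∧
          (h t + deriv h t / (2 * h t) - (μ * (1+t)^(-lam)) / 2
            ≤ -C1 * r^2 / (μ * (1+t)^(-lam))
              + (-lam * μ * (1+t)^(-lam-1)) / (μ * (1+t)^(-lam))
              + C * (1+t)^(lam-2)) := by
  obtain ⟨hε0, hε1⟩ := hε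
  refine ⟨1 / 3, by norm_num, 2, by norm_num, 1 / (ε ^ 2 * μ), by positivity,
    3 / (ε ^ 2 * μ), by positivity, ?_⟩
  rintro t hT r - h rfl hzone
  have ht1 : 0 < 1 + t := by linarith [(by positivity : (0 : ℝ) ≤ 3 / (ε ^ 2 * μ))]
  have hF : 0 < (μ * (1 + t) ^ (-lam)) ^ 2 / 4 + -lam * μ * (1 + t) ^ (-lam - 1) / 2 - r ^ 2 :=
    Real.sqrt_pos.1 ((by positivity : 0 < ε * (μ * (1 + t) ^ (-lam))).trans_le hzone)
  exact elliptic_phase_bounds_of_damping hμ hlam hε0 (by linarith) hT (Real.sq_sqrt hF.le)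
    (hasDerivAt_sqrt_symbol (hasDerivAt_damping ht1) (hasDerivAt_damping_deriv ht1) hF.ne').deriv
    hzone
end
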